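/- arXiv:1907.02469 — 9 statements merged into one kernel-verified Lean document; each statement's English description precedes it below -/
import Mathlib

section
/- Let (X, L) be a combinatorial k-net of order d with k ≤ √d. If S ⊆ X is a subset of size d whose indicator function X → ℝ lies in the real linear span of the indicator functions of the lines of L, then S is a line of L. -/
/-!
For a line `ℓ`, counting the lines through each point (one per class) gives
`∑ m, |ℓ ∩ m| 1_m = d 1_ℓ + (k - 1) 1`. By linearity this determines `∑ m, ⟨f, 1_m⟩ 1_m` for
every `f` in the span of the lines, and pairing with `f = 1_S` yields
`∑ m, |S ∩ m|² = d² + (k - 1) d`. The left side counts ordered pairs of points of `S` together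
with a line through both: the diagonal contributes `k d`, and each of the `d (d - 1)` other pairs
at most one line. So any two points of `S` are collinear. The `k` lines through a point of `S`
then cover all `d ≥ k²` points of `S`, so one of them, `ℓ`, meets `S` in at least `k` points.
A point of `S` off `ℓ` would be joined to these by `k` distinct lines, yet only `k - 1` lines
through it meet `ℓ`. Hence `S ⊆ ℓ`, and `S = ℓ` as both have `d` points.
-/

open Finset Matrix

namespace CombinatorialNet

variable {X : Type*} {k : ℕ}

def ClassesPartition (L : Finset (Finset X)) (c : Finset X → Fin k) : Prop :=
  ∀ i x, ∃! ℓ, ℓ ∈ L ∧ c ℓ = i ∧ x ∈ ℓ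

def DistinctClassesMeetOnce [DecidableEq X] (L : Finset (Finset X)) (c : Finset X → Fin k) :
    Prop :=
  ∀ ℓ ∈ L, ∀ ℓ' ∈ L, c ℓ ≠ c ℓ' → #(ℓ ∩ ℓ') = 1

variable {L : Finset (Finset X)} {c : Finset X → Fin k}

theorem ClassesPartition.eq_of_mem_of_mem (hclass : ClassesPartition L c) {ℓ m : Finset X}
    {x : X} (hℓ : ℓ ∈ L) (hm : m ∈ L) (hc : c ℓ = c m) (hxℓ : x ∈ ℓ) (hxm : x ∈ m) : ℓ = m :=
  (hclass (c m) x).unique ⟨hℓ, hc, hxℓ⟩ ⟨hm, rfl, hxm⟩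

variable [DecidableEq X]

theorem ClassesPartition.card_filter_mem (hclass : ClassesPartition L c) (x : X) :
    #{m ∈ L | x ∈ m} = k := by
  rw [← card_fin k]
  refine card_bij (fun m _ ↦ c m) (fun _ _ ↦ mem_univ _) ?_ ?_
  · intro m hm m' hm' h
    rw [mem_filter] at hm hm'
    exact hclass.eq_of_mem_of_mem hm.1 hm'.1 h hm.2 hm'.2
  · intro i _
    obtain ⟨ℓ, ⟨hℓ, hc, hx⟩, -⟩ := hclass i x
    exact ⟨ℓ, mem_filter.2 ⟨hℓ, hx⟩, hc⟩

theorem card_filter_mem_mem_le_one (hclass : ClassesPartition L c)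
    (hmeet : DistinctClassesMeetOnce L c) {x y : X} (hxy : x ≠ y) :
    #{m ∈ L | x ∈ m ∧ y ∈ m} ≤ 1 := by
  refine card_le_one.2 fun m hm m' hm' ↦ ?_
  rw [mem_filter] at hm hm'
  by_contra hne
  have hc : c m ≠ c m' := fun hc ↦ hne (hclass.eq_of_mem_of_mem hm.1 hm'.1 hc hm.2.1 hm'.2.1)
  have : 1 < #(m ∩ m') :=
    one_lt_card.2 ⟨x, mem_inter.2 ⟨hm.2.1, hm'.2.1⟩, y, mem_inter.2 ⟨hm.2.2, hm'.2.2⟩, hxy⟩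
  exact this.ne' (hmeet m hm.1 m' hm'.1 hc)

theorem sum_card_inter_filter_mem (hclass : ClassesPartition L c)
    (hmeet : DistinctClassesMeetOnce L c) {ℓ : Finset X} (hℓ : ℓ ∈ L) (x : X) :
    ∑ m ∈ L with x ∈ m, #(ℓ ∩ m) = (if x ∈ ℓ then #ℓ else 0) + (k - 1) := by
  obtain ⟨m₀, ⟨hm₀, hc₀, hx₀⟩, -⟩ := hclass (c ℓ) x
  have hm₀x : m₀ ∈ {m ∈ L | x ∈ m} := mem_filter.2 ⟨hm₀, hx₀⟩
  have hm₀ℓ : #(ℓ ∩ m₀) = if x ∈ ℓ then #ℓ else 0 := by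
    split_ifs with hx
    · rw [hclass.eq_of_mem_of_mem hm₀ hℓ hc₀ hx₀ hx, inter_self]
    · refine card_eq_zero.2 (eq_empty_of_forall_notMem fun z hz ↦ hx ?_)
      rw [mem_inter] at hz
      exact hclass.eq_of_mem_of_mem hm₀ hℓ hc₀ hz.2 hz.1 ▸ hx₀
  have hother : ∀ m ∈ {m ∈ L | x ∈ m}.erase m₀, #(ℓ ∩ m) = 1 := by
    intro m hm
    simp only [mem_erase, mem_filter] at hm
    refine hmeet ℓ hℓ m hm.2.1 fun hc ↦ hm.1 ?_
    exact hclass.eq_of_mem_of_mem hm.2.1 hm₀ (hc.symm.trans hc₀.symm) hm.2.2 hx₀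
  rw [← add_sum_erase _ _ hm₀x, hm₀ℓ, sum_congr rfl hother, sum_const, smul_eq_mul, mul_one,
    card_erase_of_mem hm₀x, hclass.card_filter_mem]

section Indicator

def ind (s : Finset X) : X → ℝ := fun x ↦ if x ∈ s then 1 else 0

theorem sum_card_inter_smul_ind (hclass : ClassesPartition L c)
    (hmeet : DistinctClassesMeetOnce L c) {ℓ : Finset X} (hℓ : ℓ ∈ L) :
    ∑ m ∈ L, (#(ℓ ∩ m) : ℝ) • ind m = (#ℓ : ℝ) • ind ℓ + ((k : ℝ) - 1) • 1 := by
  ext x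
  have h := congrArg (Nat.cast : ℕ → ℝ) (sum_card_inter_filter_mem hclass hmeet hℓ x)
  have hk : 1 ≤ k := (c ℓ).pos
  push_cast [hk] at h
  simp only [Finset.sum_apply, Pi.smul_apply, Pi.add_apply, ind, smul_eq_mul, mul_ite, mul_one,
    mul_zero, Pi.one_apply, ← sum_filter, h]

variable [Fintype X]

theorem dotProduct_ind (f : X → ℝ) (s : Finset X) : f ⬝ᵥ ind s = ∑ x ∈ s, f x := by
  simp [dotProduct, ind]

theorem ind_dotProduct_ind (s t : Finset X) : ind s ⬝ᵥ ind t = #(s ∩ t) := by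
  rw [dotProduct_ind, inter_comm]
  simp [ind]

/-- The factor `d` is there because `⟨f, 1⟩ = d ∑ aₗ` for `f = ∑ aₗ 1_ℓ`. -/
theorem smul_sum_dotProduct_ind_smul_ind {d : ℕ} (hsize : ∀ ℓ ∈ L, #ℓ = d)
    (hclass : ClassesPartition L c) (hmeet : DistinctClassesMeetOnce L c) {f : X → ℝ}
    (hf : f ∈ Submodule.span ℝ (ind '' (L : Set (Finset X)))) :
    (d : ℝ) • ∑ m ∈ L, (f ⬝ᵥ ind m) • ind m = (d : ℝ) ^ 2 • f + (((k : ℝ) - 1) * (f ⬝ᵥ 1)) • 1 := by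
  induction hf using Submodule.span_induction with
  | mem _ hg =>
    obtain ⟨ℓ, hℓ, rfl⟩ := hg
    have hone : ind ℓ ⬝ᵥ 1 = d := by rw [dotProduct_comm, dotProduct_ind]; simp [hsize ℓ hℓ]
    simp only [ind_dotProduct_ind, sum_card_inter_smul_ind hclass hmeet hℓ, hsize ℓ hℓ, hone]
    module
  | zero => simp
  | add f g _ _ hf hg =>
    simp only [add_dotProduct, add_smul, sum_add_distrib, smul_add, hf, hg]
    module
  | smul a f _ hf =>
    simp only [smul_dotProduct, smul_eq_mul, mul_smul, ← smul_sum]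
    rw [smul_comm, hf]
    module

theorem sum_card_inter_sq_of_ind_mem_span {d : ℕ} (hsize : ∀ ℓ ∈ L, #ℓ = d)
    (hclass : ClassesPartition L c) (hmeet : DistinctClassesMeetOnce L c) {S : Finset X}
    (hspan : ind S ∈ Submodule.span ℝ (ind '' (L : Set (Finset X)))) (hS : #S = d) (hd : 0 < d) :
    ∑ m ∈ L, #(S ∩ m) ^ 2 + #S = #S * #S + k * #S := by
  have h := congrArg (ind S ⬝ᵥ ·) (smul_sum_dotProduct_ind_smul_ind hsize hclass hmeet hspan)
  have hone : ind S ⬝ᵥ 1 = d := by rw [dotProduct_comm, dotProduct_ind]; simp [hS]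
  simp only [dotProduct_smul, dotProduct_sum, dotProduct_add, ind_dotProduct_ind, inter_self, hS,
    hone, smul_eq_mul, ← sq] at h
  have hsq : (∑ m ∈ L, (#(S ∩ m) : ℝ) ^ 2) + d = d * d + k * d := by
    have hd' : (0 : ℝ) < d := Nat.cast_pos.2 hd
    nlinarith
  rw [hS]
  exact_mod_cast hsq

end Indicator

theorem sum_card_inter_sq (L : Finset (Finset X)) (S : Finset X) :
    ∑ m ∈ L, #(S ∩ m) ^ 2 = ∑ p ∈ S ×ˢ S, #{m ∈ L | p.1 ∈ m ∧ p.2 ∈ m} := by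
  have h : ∀ m, (S ∩ m) ×ˢ (S ∩ m) = {p ∈ S ×ˢ S | p.1 ∈ m ∧ p.2 ∈ m} := by
    intro m
    ext p
    simp [and_and_and_comm]
  simp_rw [sq, ← card_product, h, card_eq_sum_ones, sum_filter]
  exact sum_comm

theorem pairwise_collinear_of_sum_card_inter_sq (hclass : ClassesPartition L c)
    (hmeet : DistinctClassesMeetOnce L c) {S : Finset X}
    (hsq : ∑ m ∈ L, #(S ∩ m) ^ 2 + #S = #S * #S + k * #S) :
    (S : Set X).Pairwise fun x y ↦ ∃ m ∈ L, x ∈ m ∧ y ∈ m := by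
  set n : X × X → ℕ := fun p ↦ #{m ∈ L | p.1 ∈ m ∧ p.2 ∈ m}
  have hdiag : ∑ p ∈ S.diag, n p = k * #S := by
    rw [← diag_card, card_eq_sum_ones, mul_sum, mul_one]
    refine sum_congr rfl fun p hp ↦ ?_
    rw [mem_diag] at hp
    simp only [n, ← hp.2, and_self, hclass.card_filter_mem]
  have hoff : ∑ p ∈ S.offDiag, n p = ∑ p ∈ S.offDiag, 1 := by
    rw [sum_card_inter_sq, ← diag_union_offDiag, sum_union (disjoint_diag_offDiag S), hdiag]
      at hsq
    rw [← card_eq_sum_ones, offDiag_card]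
    have := Nat.le_mul_self #S
    simp only [n]
    omega
  intro x hx y hy hxy
  have hn : n (x, y) = 1 := (sum_eq_sum_iff_of_le fun p hp ↦
    card_filter_mem_mem_le_one hclass hmeet (mem_offDiag.1 hp).2.2).1 hoff _
      (mem_offDiag.2 ⟨hx, hy, hxy⟩)
  obtain ⟨m, hm⟩ := card_pos.1 (hn ▸ Nat.one_pos : 0 < n (x, y))
  exact ⟨m, (mem_filter.1 hm).1, (mem_filter.1 hm).2⟩

theorem exists_le_card_inter (hclass : ClassesPartition L c) {S : Finset X}
    (hS : (S : Set X).Pairwise fun x y ↦ ∃ m ∈ L, x ∈ m ∧ y ∈ m) (hk : 0 < k)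
    (hkS : k * k ≤ #S) {x : X} (hx : x ∈ S) : ∃ ℓ ∈ L, k ≤ #(S ∩ ℓ) := by
  have hcover : #S * 1 ≤ ∑ m ∈ L with x ∈ m, #(S ∩ m) := by
    refine le_sum_card_inter fun y hy ↦ card_pos.2 ?_
    obtain rfl | hxy := eq_or_ne x y
    · obtain ⟨ℓ, ⟨hℓ, -, hxℓ⟩, -⟩ := hclass ⟨0, hk⟩ x
      exact ⟨ℓ, by simp [hℓ, hxℓ]⟩
    · obtain ⟨m, hm, hxm, hym⟩ := hS hx hy hxy
      exact ⟨m, by simp [hm, hxm, hym]⟩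
  have hlt : ∑ m ∈ L with x ∈ m, (k - 1) < ∑ m ∈ L with x ∈ m, #(S ∩ m) := by
    rw [sum_const, hclass.card_filter_mem, smul_eq_mul]
    have : k * (k - 1) < k * k := Nat.mul_lt_mul_of_pos_left (by omega) hk
    omega
  obtain ⟨ℓ, hℓ, hkℓ⟩ := exists_lt_of_sum_lt hlt
  exact ⟨ℓ, (mem_filter.1 hℓ).1, by omega⟩

theorem subset_of_le_card_inter (hclass : ClassesPartition L c)
    (hmeet : DistinctClassesMeetOnce L c) {S : Finset X}
    (hS : (S : Set X).Pairwise fun x y ↦ ∃ m ∈ L, x ∈ m ∧ y ∈ m) {ℓ : Finset X} (hℓ : ℓ ∈ L)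
    (hkℓ : k ≤ #(S ∩ ℓ)) : S ⊆ ℓ := by
  intro y hy
  by_contra hyℓ
  have hcover : #(S ∩ ℓ) * 1 ≤ ∑ m ∈ L with y ∈ m, #(S ∩ ℓ ∩ m) := by
    refine le_sum_card_inter fun z hz ↦ card_pos.2 ?_
    rw [mem_inter] at hz
    obtain ⟨m, hm, hym, hzm⟩ := hS hy hz.1 fun h ↦ hyℓ (h ▸ hz.2)
    exact ⟨m, by simp [hm, hym, hzm]⟩
  have hbound : ∑ m ∈ L with y ∈ m, #(S ∩ ℓ ∩ m) ≤ k - 1 :=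
    calc ∑ m ∈ L with y ∈ m, #(S ∩ ℓ ∩ m) ≤ ∑ m ∈ L with y ∈ m, #(ℓ ∩ m) :=
          sum_le_sum fun m _ ↦ card_le_card (inter_subset_inter_right inter_subset_right)
      _ = k - 1 := by rw [sum_card_inter_filter_mem hclass hmeet hℓ, if_neg hyℓ, zero_add]
  have := (c ℓ).pos
  omega

end CombinatorialNet

open CombinatorialNet

theorem knet_rigidity_combinatorial_general
    (d k : ℕ) (X : Type) [Fintype X] [DecidableEq X]
    (hk : (k : ℝ) ≤ Real.sqrt d)
    (L : Finset (Finset X))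
    (c : Finset X → Fin k)
    (hsize : ∀ ℓ ∈ L, ℓ.card = d)
    (hclass : ∀ i : Fin k, ∀ x : X, ∃! ℓ, ℓ ∈ L ∧ c ℓ = i ∧ x ∈ ℓ)
    (hmeet : ∀ ℓ ∈ L, ∀ ℓ' ∈ L, c ℓ ≠ c ℓ' → (ℓ ∩ ℓ').card = 1)
    (S : Finset X) (hS : S.card = d)
    (hspan : (fun x => if x ∈ S then (1 : ℝ) else 0) ∈
      Submodule.span ℝ
        ((fun ℓ : Finset X => (fun x => if x ∈ ℓ then (1 : ℝ) else 0)) '' (L : Set (Finset X)))) :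
    S ∈ L := by
  have hk0 : 0 < k := (c ∅).pos
  have hkd : k * k ≤ d := by
    rwa [Real.le_sqrt (by positivity) (by positivity), ← Nat.cast_pow, Nat.cast_le, sq] at hk
  have hd : 0 < d := (Nat.mul_pos hk0 hk0).trans_le hkd
  have hcol := pairwise_collinear_of_sum_card_inter_sq hclass hmeet
    (sum_card_inter_sq_of_ind_mem_span hsize hclass hmeet hspan hS hd)
  obtain ⟨x, hx⟩ : S.Nonempty := card_pos.1 (hS ▸ hd)
  obtain ⟨ℓ, hℓ, hkℓ⟩ := exists_le_card_inter hclass hcol hk0 (hS ▸ hkd) hx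
  have hSℓ := subset_of_le_card_inter hclass hmeet hcol hℓ hkℓ
  rwa [eq_of_subset_of_card_le hSℓ (by rw [hS, hsize ℓ hℓ])]

/-- Rigidity for combinatorial `k`-nets of order `d`:
`X` is a set of `d²` points, `L` a collection of lines of size `d`, partitioned into `k`
parallel classes (the fibers of a class function `c` on lines, each class nonempty),
such that every point lies on exactly one line of each class and lines from different
classes meet in exactly one point.  If `k ≤ √d` and `S ⊆ X` has size `d` with its
(real-valued) indicator function lying in the real linear span of the indicator functions
of the lines, then `S` is a line. -/
theorem knet_rigidity_combinatorial
    (d k : ℕ) (X : Type) [Fintype X] [DecidableEq X]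
    (hX : Fintype.card X = d ^ 2)
    (hk : (k : ℝ) ≤ Real.sqrt d)
    (L : Finset (Finset X))
    (c : Finset X → Fin k)
    (hsize : ∀ ℓ ∈ L, ℓ.card = d)
    (hsurj : ∀ i : Fin k, ∃ ℓ ∈ L, c ℓ = i)
    (hclass : ∀ i : Fin k, ∀ x : X, ∃! ℓ, ℓ ∈ L ∧ c ℓ = i ∧ x ∈ ℓ)
    (hmeet : ∀ ℓ ∈ L, ∀ ℓ' ∈ L, c ℓ ≠ c ℓ' → (ℓ ∩ ℓ').card = 1)
    (S : Finset X) (hS : S.card = d)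
    (hspan : (fun x => if x ∈ S then (1 : ℝ) else 0) ∈
      Submodule.span ℝ
        ((fun ℓ : Finset X => (fun x => if x ∈ ℓ then (1 : ℝ) else 0)) '' (L : Set (Finset X)))) :
    S ∈ L :=
  knet_rigidity_combinatorial_general d k X hk L c hsize hclass hmeet S hS hspan
end

section
/- Let k ≤ √d and let N be a combinatorial (d+1−k)-net of order d on a point set X. Suppose N can be completed to an affine plane, i.e., there exists a combinatorial (d+1)-net Ñ of order d on X whose set of lines contains all lines of N. Then a subset T ⊆ X is a line of Ñ that is not a line of N if and only if T intersects every line of N in exactly one point. Consequently, the completion is unique: any two (d+1)-nets of order d on X whose lines include all lines of N have the same set of lines. -/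
open Finset


/-- A combinatorial `k`-net of order `d` on a (finite) point set `X`: a collection `L`
of lines, each of size `d`, partitioned into `k` parallel classes (the fibers of a class
function `c`, each nonempty) such that every point lies on exactly one line of each class
and lines from different classes intersect in exactly one point. -/
def IsKNet (d k : ℕ) (X : Type) [DecidableEq X] (L : Finset (Finset X)) : Prop :=
  (∀ ℓ ∈ L, ℓ.card = d) ∧
  ∃ c : Finset X → Fin k,
    (∀ i : Fin k, ∃ ℓ ∈ L, c ℓ = i) ∧
    (∀ i : Fin k, ∀ x : X, ∃! ℓ, ℓ ∈ L ∧ c ℓ = i ∧ x ∈ ℓ) ∧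
    (∀ ℓ ∈ L, ∀ ℓ' ∈ L, c ℓ ≠ c ℓ' → (ℓ ∩ ℓ').card = 1)


lemma lines_through_card {X : Type} [DecidableEq X] {m : ℕ}
    (L : Finset (Finset X)) (c : Finset X → Fin m)
    (huniq : ∀ i : Fin m, ∀ x : X, ∃! ℓ, ℓ ∈ L ∧ c ℓ = i ∧ x ∈ ℓ)
    (x : X) : (L.filter (fun ℓ => x ∈ ℓ)).card = m := by
  classical
  have hmem : ∀ i : Fin m, (huniq i x).choose ∈ L ∧ c (huniq i x).choose = i ∧
      x ∈ (huniq i x).choose := fun i => (huniq i x).choose_spec.1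
  have himg : L.filter (fun ℓ => x ∈ ℓ) = Finset.image (fun i => (huniq i x).choose) Finset.univ := by
    ext ℓ
    simp only [mem_filter, mem_image, mem_univ, true_and]
    constructor
    · rintro ⟨hL, hx⟩
      exact ⟨c ℓ, ((huniq (c ℓ) x).choose_spec.2 ℓ ⟨hL, rfl, hx⟩).symm⟩
    · rintro ⟨i, rfl⟩
      exact ⟨(hmem i).1, (hmem i).2.2⟩
  rw [himg, Finset.card_image_of_injOn, Finset.card_univ, Fintype.card_fin]
  intro i _ j _ hij
  rw [← (hmem i).2.1, ← (hmem j).2.1]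
  exact congrArg c hij

lemma line_unique {X : Type} [DecidableEq X] {m : ℕ}
    {L : Finset (Finset X)} {c : Finset X → Fin m}
    (huniq : ∀ i : Fin m, ∀ x : X, ∃! ℓ, ℓ ∈ L ∧ c ℓ = i ∧ x ∈ ℓ)
    (hint : ∀ ℓ ∈ L, ∀ ℓ' ∈ L, c ℓ ≠ c ℓ' → (ℓ ∩ ℓ').card = 1)
    {x y : X} (hxy : x ≠ y) {ℓ ℓ' : Finset X}
    (hℓ : ℓ ∈ L) (hℓ' : ℓ' ∈ L) (hx : x ∈ ℓ) (hx' : x ∈ ℓ')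
    (hy : y ∈ ℓ) (hy' : y ∈ ℓ') : ℓ = ℓ' := by
  by_cases hc : c ℓ = c ℓ'
  · exact (huniq (c ℓ') x).unique ⟨hℓ, hc, hx⟩ ⟨hℓ', rfl, hx'⟩
  · have h := hint ℓ hℓ ℓ' hℓ' hc
    have hsub : ({x, y} : Finset X) ⊆ ℓ ∩ ℓ' := by
      intro z hz
      simp only [mem_insert, mem_singleton] at hz
      rcases hz with rfl | rfl <;> simp [mem_inter, *]
    have h2 : ({x, y} : Finset X).card ≤ 1 := h ▸ card_le_card hsub
    rw [card_insert_of_notMem (by simpa using hxy), card_singleton] at h2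
    omega

lemma two_point_line {d : ℕ} (hd : 1 ≤ d) {X : Type} [Fintype X] [DecidableEq X]
    (hX : Fintype.card X = d ^ 2) {L : Finset (Finset X)} {c : Finset X → Fin (d + 1)}
    (hcard : ∀ ℓ ∈ L, ℓ.card = d)
    (huniq : ∀ i : Fin (d + 1), ∀ x : X, ∃! ℓ, ℓ ∈ L ∧ c ℓ = i ∧ x ∈ ℓ)
    (hint : ∀ ℓ ∈ L, ∀ ℓ' ∈ L, c ℓ ≠ c ℓ' → (ℓ ∩ ℓ').card = 1)
    {x y : X} (hxy : x ≠ y) : ∃! ℓ, ℓ ∈ L ∧ x ∈ ℓ ∧ y ∈ ℓ := by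
  classical
  have hG : (L.filter (fun ℓ => x ∈ ℓ)).card = d + 1 := lines_through_card L c huniq x
  set G := L.filter (fun ℓ => x ∈ ℓ) with hGdef
  have hdisj : ∀ ℓ ∈ G, ∀ ℓ' ∈ G, ℓ ≠ ℓ' → Disjoint (ℓ.erase x) (ℓ'.erase x) := by
    intro ℓ hℓ ℓ' hℓ' hne
    simp only [hGdef, mem_filter] at hℓ hℓ'
    rw [disjoint_left]
    intro z hz hz'
    exact hne (line_unique huniq hint (Ne.symm (ne_of_mem_erase hz)) hℓ.1 hℓ'.1 hℓ.2 hℓ'.2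
      (mem_of_mem_erase hz) (mem_of_mem_erase hz'))
  have hcardE : (G.biUnion (fun ℓ => ℓ.erase x)).card = (d + 1) * (d - 1) := by
    rw [card_biUnion hdisj]
    rw [Finset.sum_congr rfl (fun ℓ hℓ => by
      simp only [hGdef, mem_filter] at hℓ
      rw [card_erase_of_mem hℓ.2, hcard ℓ hℓ.1]), Finset.sum_const, hG, smul_eq_mul]
  have hsubE : G.biUnion (fun ℓ => ℓ.erase x) ⊆ Finset.univ.erase x := by
    intro z hz
    simp only [mem_biUnion] at hz
    obtain ⟨ℓ, _, hz⟩ := hz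
    exact mem_erase.mpr ⟨ne_of_mem_erase hz, mem_univ z⟩
  have hEeq : G.biUnion (fun ℓ => ℓ.erase x) = Finset.univ.erase x := by
    apply Finset.eq_of_subset_of_card_le hsubE
    rw [card_erase_of_mem (mem_univ x), Finset.card_univ, hX, hcardE]
    obtain ⟨e, rfl⟩ : ∃ e, d = e + 1 := ⟨d - 1, by omega⟩
    have h1 : (e + 1) ^ 2 = e * e + 2 * e + 1 := by ring
    have h2 : (e + 1 + 1) * (e + 1 - 1) = e * e + 2 * e := by
      rw [Nat.add_sub_cancel]; ring
    omega
  have hy' : y ∈ G.biUnion (fun ℓ => ℓ.erase x) :=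
    hEeq ▸ mem_erase.mpr ⟨hxy.symm, mem_univ y⟩
  obtain ⟨ℓ, hℓG, hyℓ⟩ := mem_biUnion.mp hy'
  simp only [hGdef, mem_filter] at hℓG
  refine ⟨ℓ, ⟨hℓG.1, hℓG.2, mem_of_mem_erase hyℓ⟩, ?_⟩
  rintro ℓ' ⟨h1, h2, h3⟩
  exact line_unique huniq hint hxy h1 hℓG.1 h2 hℓG.2 h3 (mem_of_mem_erase hyℓ)

lemma transversal_iff {d k : ℕ} (hd : 2 ≤ d) (hk2 : k * k ≤ d)
    {X : Type} [Fintype X] [DecidableEq X] (hX : Fintype.card X = d ^ 2)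
    {N M : Finset (Finset X)}
    (hN : IsKNet d (d + 1 - k) X N) (hM : IsKNet d (d + 1) X M) (hsub : N ⊆ M)
    (T : Finset X) : (T ∈ M ∧ T ∉ N) ↔ (∀ ℓ ∈ N, (T ∩ ℓ).card = 1) := by
  classical
  obtain ⟨hcardN, cN, hsurjN, huniqN, hintN⟩ := hN
  obtain ⟨hcardM, cM, hsurjM, huniqM, hintM⟩ := hM
  have hd1 : 1 ≤ d := by omega
  have hkd : k ≤ d := by
    rcases Nat.eq_zero_or_pos k with rfl | hk1
    · omega
    · calc k = 1 * k := (one_mul k).symm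
        _ ≤ k * k := Nat.mul_le_mul_right k hk1
        _ ≤ d := hk2
  constructor
  · rintro ⟨hTM, hTN⟩ ℓ hℓ
    by_cases hc : cM T = cM ℓ
    · exfalso
      obtain ⟨x, hx⟩ := Finset.card_pos.mp (show 0 < T.card by rw [hcardM T hTM]; omega)
      obtain ⟨ℓ'', ⟨hℓ''N, hℓ''c, hxℓ''⟩, -⟩ := huniqN (cN ℓ) x
      have hcMeq : cM ℓ'' = cM ℓ := by
        by_cases heq : ℓ'' = ℓ
        · rw [heq]
        · by_contra hne
          have h1 := hintM ℓ'' (hsub hℓ''N) ℓ (hsub hℓ) hne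
          have hdis : ℓ'' ∩ ℓ = ∅ := by
            rw [Finset.eq_empty_iff_forall_notMem]
            intro z hz
            rw [mem_inter] at hz
            exact heq ((huniqN (cN ℓ) z).unique ⟨hℓ''N, hℓ''c, hz.1⟩ ⟨hℓ, rfl, hz.2⟩)
          rw [hdis] at h1
          simp at h1
      have hTeq : T = ℓ'' :=
        (huniqM (cM T) x).unique ⟨hTM, rfl, hx⟩ ⟨hsub hℓ''N, by rw [hcMeq, ← hc], hxℓ''⟩
      exact hTN (hTeq ▸ hℓ''N)
    · exact hintM T hTM ℓ (hsub hℓ) hc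
  · intro hT
    have hTN : T ∉ N := by
      intro hTN
      have h1 := hT T hTN
      rw [inter_self] at h1
      have h2 := hcardN T hTN
      omega
    -- |T| = d
    have hpos : 0 < d + 1 - k := by omega
    set i0 : Fin (d + 1 - k) := ⟨0, hpos⟩ with hi0
    set A := N.filter (fun ℓ => cN ℓ = i0) with hA
    have hcover : ∀ z : X, ∃ ℓ ∈ A, z ∈ ℓ := by
      intro z
      obtain ⟨ℓ, ⟨h1, h2, h3⟩, -⟩ := huniqN i0 z
      exact ⟨ℓ, mem_filter.mpr ⟨h1, h2⟩, h3⟩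
    have hdisjA : ∀ ℓ ∈ A, ∀ ℓ' ∈ A, ℓ ≠ ℓ' → Disjoint ℓ ℓ' := by
      intro ℓ hℓ ℓ' hℓ' hne
      simp only [hA, mem_filter] at hℓ hℓ'
      rw [disjoint_left]
      intro z hz hz'
      exact hne ((huniqN i0 z).unique ⟨hℓ.1, hℓ.2, hz⟩ ⟨hℓ'.1, hℓ'.2, hz'⟩)
    have hAcard : A.card = d := by
      have hU : A.biUnion (fun ℓ => ℓ) = Finset.univ := by
        rw [Finset.eq_univ_iff_forall]
        intro z
        rw [mem_biUnion]
        obtain ⟨ℓ, h1, h2⟩ := hcover z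
        exact ⟨ℓ, h1, h2⟩
      have hc2 := congrArg Finset.card hU
      rw [card_biUnion hdisjA, Finset.card_univ, hX] at hc2
      rw [Finset.sum_congr rfl (fun ℓ hℓ => hcardN ℓ (mem_filter.mp hℓ).1),
        Finset.sum_const, smul_eq_mul] at hc2
      exact Nat.eq_of_mul_eq_mul_right (show 0 < d by omega) (by rw [hc2, sq])
    have hTcard : T.card = d := by
      have hTA : A.biUnion (fun ℓ => T ∩ ℓ) = T := by
        ext z
        simp only [mem_biUnion, mem_inter]
        constructor
        · rintro ⟨ℓ, _, hz, _⟩; exact hz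
        · intro hz
          obtain ⟨ℓ, h1, h2⟩ := hcover z
          exact ⟨ℓ, h1, hz, h2⟩
      have hdisj' : ∀ ℓ ∈ A, ∀ ℓ' ∈ A, ℓ ≠ ℓ' → Disjoint (T ∩ ℓ) (T ∩ ℓ') := by
        intro ℓ h1 ℓ' h2 hne
        exact Finset.disjoint_of_subset_left inter_subset_right
          (Finset.disjoint_of_subset_right inter_subset_right (hdisjA ℓ h1 ℓ' h2 hne))
      rw [← hTA, card_biUnion hdisj',
        Finset.sum_congr rfl (fun ℓ hℓ => hT ℓ (mem_filter.mp hℓ).1),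
        Finset.sum_const, smul_eq_mul, mul_one, hAcard]
    refine ⟨?_, hTN⟩
    by_contra hTM
    -- key bound: free lines meet T in ≤ k-1 points
    have key : ∀ m ∈ M, m ∉ N → (T ∩ m).card + 1 ≤ k := by
      intro m hm hmN
      have hmT : ¬ m ⊆ T := by
        intro hsubmT
        have : m = T := Finset.eq_of_subset_of_card_le hsubmT
          (by rw [hTcard, hcardM m hm])
        exact hTM (this ▸ hm)
      obtain ⟨y, hym, hyT⟩ := Finset.not_subset.mp hmT
      set G := M.filter (fun ℓ => y ∈ ℓ) with hG
      have hGNcard : (G ∩ N).card = d + 1 - k := by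
        have hGN : G ∩ N = N.filter (fun ℓ => y ∈ ℓ) := by
          ext ℓ
          simp only [hG, mem_inter, mem_filter]
          constructor
          · rintro ⟨⟨_, h2⟩, h3⟩; exact ⟨h3, h2⟩
          · rintro ⟨h1, h2⟩; exact ⟨⟨hsub h1, h2⟩, h1⟩
        rw [hGN]
        exact lines_through_card N cN huniqN y
      have hTpart : G.biUnion (fun ℓ => T ∩ ℓ) = T := by
        ext z
        simp only [mem_biUnion, mem_inter]
        constructor
        · rintro ⟨ℓ, _, hz, _⟩; exact hz
        · intro hz
          have hzy : z ≠ y := fun h => hyT (h ▸ hz)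
          obtain ⟨ℓ, ⟨h1, h2, h3⟩, -⟩ := two_point_line hd1 hX hcardM huniqM hintM hzy
          exact ⟨ℓ, mem_filter.mpr ⟨h1, h3⟩, hz, h2⟩
      have hdisjG : ∀ ℓ ∈ G, ∀ ℓ' ∈ G, ℓ ≠ ℓ' → Disjoint (T ∩ ℓ) (T ∩ ℓ') := by
        intro ℓ h1 ℓ' h2 hne
        rw [disjoint_left]
        intro z hz hz'
        simp only [mem_inter] at hz hz'
        simp only [hG, mem_filter] at h1 h2
        have hzy : z ≠ y := fun h => hyT (h ▸ hz.1)
        exact hne (line_unique huniqM hintM hzy h1.1 h2.1 hz.2 hz'.2 h1.2 h2.2)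
      have hsum : ∑ ℓ ∈ G, (T ∩ ℓ).card = d := by
        rw [← card_biUnion hdisjG, hTpart, hTcard]
      have hsplit : ∑ ℓ ∈ G ∩ N, (T ∩ ℓ).card + ∑ ℓ ∈ G \ N, (T ∩ ℓ).card = d := by
        rw [Finset.sum_inter_add_sum_sdiff]
        exact hsum
      have h1 : ∑ ℓ ∈ G ∩ N, (T ∩ ℓ).card = d + 1 - k := by
        rw [Finset.sum_congr rfl (fun ℓ hℓ => hT ℓ (mem_inter.mp hℓ).2),
          Finset.sum_const, smul_eq_mul, mul_one, hGNcard]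
      have hmemm : m ∈ G \ N := mem_sdiff.mpr ⟨mem_filter.mpr ⟨hm, hym⟩, hmN⟩
      have h2 : (T ∩ m).card ≤ ∑ ℓ ∈ G \ N, (T ∩ ℓ).card :=
        Finset.single_le_sum (f := fun ℓ => (T ∩ ℓ).card) (fun _ _ => Nat.zero_le _) hmemm
      omega
    -- counting through a point of T
    obtain ⟨x, hx⟩ := Finset.card_pos.mp (show 0 < T.card by omega)
    set G := M.filter (fun ℓ => x ∈ ℓ) with hG
    have hGcard : G.card = d + 1 := lines_through_card M cM huniqM x
    have hGNcard : (G ∩ N).card = d + 1 - k := by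
      have hGN : G ∩ N = N.filter (fun ℓ => x ∈ ℓ) := by
        ext ℓ
        simp only [hG, mem_inter, mem_filter]
        constructor
        · rintro ⟨⟨_, h2⟩, h3⟩; exact ⟨h3, h2⟩
        · rintro ⟨h1, h2⟩; exact ⟨⟨hsub h1, h2⟩, h1⟩
      rw [hGN]
      exact lines_through_card N cN huniqN x
    have hGFcard : (G \ N).card = k := by
      have h3 := Finset.card_inter_add_card_sdiff G N
      omega
    have hpart : G.biUnion (fun ℓ => (T ∩ ℓ).erase x) = T.erase x := by
      ext z
      simp only [mem_biUnion, mem_erase, mem_inter]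
      constructor
      · rintro ⟨ℓ, _, hz1, hz2, _⟩; exact ⟨hz1, hz2⟩
      · rintro ⟨hzx, hzT⟩
        obtain ⟨ℓ, ⟨h1, h2, h3⟩, -⟩ := two_point_line hd1 hX hcardM huniqM hintM hzx
        exact ⟨ℓ, mem_filter.mpr ⟨h1, h3⟩, hzx, hzT, h2⟩
    have hdisjG : ∀ ℓ ∈ G, ∀ ℓ' ∈ G, ℓ ≠ ℓ' →
        Disjoint ((T ∩ ℓ).erase x) ((T ∩ ℓ').erase x) := by
      intro ℓ h1 ℓ' h2 hne
      rw [disjoint_left]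
      intro z hz hz'
      have hzx : z ≠ x := ne_of_mem_erase hz
      rw [mem_erase, mem_inter] at hz hz'
      simp only [hG, mem_filter] at h1 h2
      exact hne (line_unique huniqM hintM hzx h1.1 h2.1 hz.2.2 hz'.2.2 h1.2 h2.2)
    have hsum : ∑ ℓ ∈ G, ((T ∩ ℓ).erase x).card = d - 1 := by
      rw [← card_biUnion hdisjG, hpart, card_erase_of_mem hx, hTcard]
    have e1 : ∑ ℓ ∈ G ∩ N, ((T ∩ ℓ).erase x).card = 0 := by
      apply Finset.sum_eq_zero
      intro ℓ hℓ
      rw [mem_inter] at hℓ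
      have h1 : (T ∩ ℓ).card = 1 := hT ℓ hℓ.2
      have hxℓ : x ∈ T ∩ ℓ := mem_inter.mpr ⟨hx, (mem_filter.mp hℓ.1).2⟩
      obtain ⟨a, ha⟩ := Finset.card_eq_one.mp h1
      rw [ha, mem_singleton] at hxℓ
      rw [ha, ← hxℓ, Finset.erase_singleton, card_empty]
    have e2 : ∑ ℓ ∈ G \ N, ((T ∩ ℓ).erase x).card ≤ k * (k - 2) := by
      calc ∑ ℓ ∈ G \ N, ((T ∩ ℓ).erase x).card
          ≤ ∑ _ℓ ∈ G \ N, (k - 2) := by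
            apply Finset.sum_le_sum
            intro ℓ hℓ
            rw [mem_sdiff] at hℓ
            have hk1 := key ℓ (mem_filter.mp hℓ.1).1 hℓ.2
            have hxℓ : x ∈ T ∩ ℓ := mem_inter.mpr ⟨hx, (mem_filter.mp hℓ.1).2⟩
            rw [card_erase_of_mem hxℓ]
            omega
        _ = k * (k - 2) := by rw [Finset.sum_const, smul_eq_mul, hGFcard]
    have e3 := Finset.sum_inter_add_sum_sdiff G N (fun ℓ => ((T ∩ ℓ).erase x).card)
    have htotal : d - 1 ≤ k * (k - 2) := by
      rw [← hsum, ← e3, e1, zero_add]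
      exact e2
    rcases Nat.lt_or_ge k 2 with hklt | hkge
    · have hz : k - 2 = 0 := by omega
      rw [hz, Nat.mul_zero] at htotal
      omega
    · obtain ⟨j, rfl⟩ : ∃ j, k = j + 2 := ⟨k - 2, by omega⟩
      have e4 : (j + 2) * (j + 2 - 2) = j * j + 2 * j := by
        rw [Nat.add_sub_cancel]; ring
      have e5 : (j + 2) * (j + 2) = j * j + 4 * j + 4 := by ring
      rw [e4] at htotal
      rw [e5] at hk2
      obtain ⟨a, ha⟩ : ∃ a, j * j = a := ⟨_, rfl⟩
      rw [ha] at htotal hk2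
      omega

/-- Let `k ≤ √d` and let `N` be a combinatorial `(d+1-k)`-net of order `d`
on a point set `X` of `d²` points, completed to an affine plane, i.e. a `(d+1)`-net `Ñ` of
order `d` on `X` whose lines contain all lines of `N`.  Then `T` is a line of `Ñ` not in `N`
iff `T` meets every line of `N` in exactly one point; consequently any two completions of `N`
to a `(d+1)`-net have the same lines. -/
theorem knet_completion_unique
    (d k : ℕ) (hk : (k : ℝ) ≤ Real.sqrt d)
    (X : Type) [Fintype X] [DecidableEq X] (hX : Fintype.card X = d ^ 2)
    (N Ntilde : Finset (Finset X))
    (hN : IsKNet d (d + 1 - k) X N)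
    (hNt : IsKNet d (d + 1) X Ntilde)
    (hsub : N ⊆ Ntilde) :
    (∀ T : Finset X, (T ∈ Ntilde ∧ T ∉ N) ↔ (∀ ℓ ∈ N, (T ∩ ℓ).card = 1)) ∧
    (∀ M : Finset (Finset X), IsKNet d (d + 1) X M → N ⊆ M → M = Ntilde) := by
  classical
  rcases Nat.lt_or_ge d 2 with hd | hd
  · interval_cases d
    · -- d = 0
      have hk0 : k = 0 := by
        have h0 : (k : ℝ) ≤ 0 := by simpa using hk
        have h1 : k ≤ 0 := by exact_mod_cast (show (k : ℝ) ≤ ((0 : ℕ) : ℝ) by simpa using h0)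
        omega
      subst hk0
      have hXempty : IsEmpty X := by
        rw [← Fintype.card_eq_zero_iff]
        simpa using hX
      have hnet : ∀ L : Finset (Finset X), IsKNet 0 1 X L → L = {∅} := by
        rintro L ⟨hcard, c, hsurj, -, -⟩
        obtain ⟨ℓ, hℓ, -⟩ := hsurj 0
        have hall : ∀ m ∈ L, m = ∅ := fun m hm => Finset.card_eq_zero.mp (hcard m hm)
        ext m
        simp only [mem_singleton]
        constructor
        · intro hm; exact hall m hm
        · rintro rfl; rwa [← hall ℓ hℓ]
      have hN0 : N = {∅} := hnet N hN
      have hNt0 : Ntilde = {∅} := hnet Ntilde hNt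
      constructor
      · intro T
        have hT : T = ∅ := Finset.eq_empty_of_forall_notMem (fun x _ => hXempty.false x)
        subst hT
        simp [hN0, hNt0]
      · intro M hM _
        rw [hnet M hM, hNt0]
    · -- d = 1 : hNt is contradictory
      exfalso
      obtain ⟨hcard, c, hsurj, huniq, hint⟩ := hNt
      obtain ⟨ℓ₀, h₀, hc₀⟩ := hsurj ⟨0, by omega⟩
      obtain ⟨ℓ₁, h₁, hc₁⟩ := hsurj ⟨1, by omega⟩
      have huniv : ∀ ℓ ∈ Ntilde, ℓ = Finset.univ := by
        intro ℓ hℓ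
        apply Finset.eq_univ_of_card
        rw [hcard ℓ hℓ, hX, one_pow]
      have heq : ℓ₀ = ℓ₁ := by rw [huniv ℓ₀ h₀, huniv ℓ₁ h₁]
      rw [heq, hc₁] at hc₀
      simp [Fin.ext_iff] at hc₀
  · -- d ≥ 2
    have hk2 : k * k ≤ d := by
      have h0 : (0 : ℝ) ≤ (d : ℝ) := by positivity
      have h2 : (k : ℝ) * k ≤ Real.sqrt d * Real.sqrt d :=
        mul_le_mul hk hk (by positivity) (Real.sqrt_nonneg _)
      rw [Real.mul_self_sqrt h0] at h2
      exact_mod_cast h2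
    refine ⟨fun T => transversal_iff hd hk2 hX hN hNt hsub T, ?_⟩
    intro M hM hsubM
    ext T
    by_cases hTN : T ∈ N
    · simp [hsubM hTN, hsub hTN]
    · constructor
      · intro hTM
        exact ((transversal_iff hd hk2 hX hN hNt hsub T).mpr
          ((transversal_iff hd hk2 hX hN hM hsubM T).mp ⟨hTM, hTN⟩)).1
      · intro hTt
        exact ((transversal_iff hd hk2 hX hN hM hsubM T).mpr
          ((transversal_iff hd hk2 hX hN hNt hsub T).mp ⟨hTt, hTN⟩)).1
end

section
/- Let d ≥ 4 and let k be an integer with 2 ≤ k ≤ √d. Let E_1, …, E_k be pairwise mutually unbiased orthonormal bases of ℂ^d, and for each j let 𝒜_j ⊆ M_d(ℂ) be the complex linear span of the rank-one orthogonal projections onto the vectors of E_j. Let P ∈ M_d(ℂ) satisfy P = P* = P² and Tr(P) = 1, and suppose P − (1/d)·I = A_1 + ⋯ + A_k where each A_j ∈ 𝒜_j is Hermitian with Tr(A_j) = 0. For each j set t_j = (d/√(d−1))·√(Tr(A_j²)/d), and assume 0 < t_j < 1 for all j. If r is an index with t_r² ≥ 1/k, then every eigenvalue λ of the Hermitian matrix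 A_r satisfies λ ≤ λ_− or λ ≥ λ_+, where λ_± = (1/(2d))·(d − 2 ± √((d−2)² − 4(d−1)(k − 3 + 1/k))). -/
open Matrix

/-!
Write `A j = ∑ a, c j a • e e*` over the vectors `e = E j a`. Unbiasedness makes the `A j`
trace-orthogonal, so `∑ j, ‖c j‖² = Tr ((P - I/d)²) = 1 - 1/d`, while `t r ² ≥ 1/k` says
`‖c r‖² ≥ (d - 1)/(d k)`. The eigenvalue `λ` of `A r` is some `c r a`, with eigenvector
`x = E r a`, and `x` is unbiased with respect to every other basis: for `j ≠ r` this gives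
`⟪x, A j x⟫ = 0` and `‖A j x‖² = ‖c j‖²/d`. Hence `P x = q x + ∑_{j ≠ r} A j x` with
`q = λ + 1/d` and the sum orthogonal to `x`; since `P` is an orthogonal projection the sum has
squared norm `q (1 - q)`. The triangle and Cauchy–Schwarz inequalities bound it by
`(k - 1) ∑_{j ≠ r} ‖c j‖²/d ≤ (k - 1)² (d - 1)/(d² k)`, a quadratic inequality in `λ` whose
solutions are `λ ≤ λ₋` and `λ ≥ λ₊`.
-/

open scoped InnerProductSpace

section DiagonalIn

variable {n : Type*} [Fintype n]

noncomputable def diagonalIn (e : n → EuclideanSpace ℂ n) (c : n → ℂ) : Matrix n n ℂ :=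
  ∑ a, c a • vecMulVec (e a).ofLp (star (e a).ofLp)

variable {e f : n → EuclideanSpace ℂ n} {c c' : n → ℂ}

theorem exists_diagonalIn_eq_of_mem_span {A : Matrix n n ℂ}
    (hA : A ∈ Submodule.span ℂ {M | ∃ a, M = vecMulVec (e a).ofLp (star (e a).ofLp)}) :
    ∃ c, diagonalIn e c = A := by
  rw [show {M | ∃ a, M = vecMulVec (e a).ofLp (star (e a).ofLp)} =
    Set.range fun a => vecMulVec (e a).ofLp (star (e a).ofLp) by ext; simp [eq_comm]] at hA
  exact (Submodule.mem_span_range_iff_exists_fun ℂ).mp hA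

theorem conjTranspose_diagonalIn : (diagonalIn e c)ᴴ = diagonalIn e (star c) := by
  simp [diagonalIn, conjTranspose_sum]

theorem trace_vecMulVec_mul_vecMulVec (u x : EuclideanSpace ℂ n) :
    trace (vecMulVec u.ofLp (star u.ofLp) * vecMulVec x.ofLp (star x.ofLp)) =
      ‖⟪u, x⟫_ℂ‖ ^ 2 := by
  have hux : star u.ofLp ⬝ᵥ x.ofLp = ⟪u, x⟫_ℂ := dotProduct_comm ..
  have hxu : u.ofLp ⬝ᵥ star x.ofLp = ⟪x, u⟫_ℂ := rfl
  rw [vecMulVec_mul_vecMulVec, trace_vecMulVec, dotProduct_smul, hux, hxu, smul_eq_mul,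
    ← inner_conj_symm x u, Complex.mul_conj']

theorem trace_diagonalIn_mul_diagonalIn :
    trace (diagonalIn e c * diagonalIn f c') =
      ∑ a, ∑ b, c a * c' b * ‖⟪e a, f b⟫_ℂ‖ ^ 2 := by
  simp only [diagonalIn, Finset.sum_mul_sum, trace_sum, smul_mul_smul_comm, trace_smul,
    trace_vecMulVec_mul_vecMulVec, smul_eq_mul]

theorem trace_diagonalIn_mul_diagonalIn_of_norm_inner_sq_eq {s : ℝ}
    (h : ∀ a b, ‖⟪e a, f b⟫_ℂ‖ ^ 2 = s) :
    trace (diagonalIn e c * diagonalIn f c') = s * (∑ a, c a) * ∑ b, c' b := by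
  simp only [trace_diagonalIn_mul_diagonalIn, ← Complex.ofReal_pow, h]
  rw [mul_assoc, Finset.sum_mul_sum, Finset.mul_sum]
  refine Finset.sum_congr rfl fun a _ => ?_
  rw [Finset.mul_sum]
  exact Finset.sum_congr rfl fun b _ => by ring

namespace Orthonormal

variable (he : Orthonormal ℂ e)
include he

theorem trace_diagonalIn : trace (diagonalIn e c) = ∑ a, c a := by
  simp [diagonalIn, trace_sum, ← EuclideanSpace.inner_eq_star_dotProduct, he.1]

theorem trace_diagonalIn_mul_diagonalIn :
    trace (diagonalIn e c * diagonalIn e c') = ∑ a, c a * c' a := by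
  rw [_root_.trace_diagonalIn_mul_diagonalIn]
  refine Finset.sum_congr rfl fun a _ => ?_
  rw [Finset.sum_eq_single a (fun b _ hba => by simp [he.inner_eq_zero hba.symm]) (by simp)]
  simp [he.1 a]

theorem trace_diagonalIn_mul_conjTranspose :
    trace (diagonalIn e c * (diagonalIn e c)ᴴ) = ((∑ a, ‖c a‖ ^ 2 : ℝ) : ℂ) := by
  rw [conjTranspose_diagonalIn, he.trace_diagonalIn_mul_diagonalIn]
  push_cast
  exact Finset.sum_congr rfl fun a _ => Complex.mul_conj' (c a)

end Orthonormal

variable [DecidableEq n]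

theorem toEuclideanLin_vecMulVec_apply (u x : EuclideanSpace ℂ n) :
    toEuclideanLin (vecMulVec u.ofLp (star u.ofLp)) x = ⟪u, x⟫_ℂ • u := by
  ext i
  simp [toLpLin_apply, vecMulVec, mulVec, dotProduct, EuclideanSpace.inner_eq_star_dotProduct,
    Finset.mul_sum, mul_comm, mul_left_comm]

theorem toEuclideanLin_diagonalIn_apply (x : EuclideanSpace ℂ n) :
    toEuclideanLin (diagonalIn e c) x = ∑ a, (c a * ⟪e a, x⟫_ℂ) • e a := by
  simp [diagonalIn, map_sum, toEuclideanLin_vecMulVec_apply, smul_smul]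

theorem inner_toEuclideanLin_diagonalIn_apply_of_norm_inner_sq_eq {x : EuclideanSpace ℂ n}
    {s : ℝ} (h : ∀ a, ‖⟪e a, x⟫_ℂ‖ ^ 2 = s) :
    ⟪x, toEuclideanLin (diagonalIn e c) x⟫_ℂ = s * ∑ a, c a := by
  simp only [toEuclideanLin_diagonalIn_apply, inner_sum, inner_smul_right, Finset.mul_sum]
  refine Finset.sum_congr rfl fun a _ => ?_
  rw [mul_assoc, ← inner_conj_symm x (e a), Complex.mul_conj', ← Complex.ofReal_pow, h, mul_comm]

namespace Orthonormal

variable (he : Orthonormal ℂ e)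
include he

theorem norm_toEuclideanLin_diagonalIn_apply_sq_of_norm_inner_sq_eq {x : EuclideanSpace ℂ n}
    {s : ℝ} (h : ∀ a, ‖⟪e a, x⟫_ℂ‖ ^ 2 = s) :
    ‖toEuclideanLin (diagonalIn e c) x‖ ^ 2 = s * ∑ a, ‖c a‖ ^ 2 := by
  rw [← inner_self_eq_norm_sq (𝕜 := ℂ), toEuclideanLin_diagonalIn_apply, he.inner_sum,
    map_sum, Finset.mul_sum]
  refine Finset.sum_congr rfl fun a _ => ?_
  rw [Complex.conj_mul', ← Complex.ofReal_pow, RCLike.re_to_complex, Complex.ofReal_re, norm_mul,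
    mul_pow, h, mul_comm]

theorem inner_toEuclideanLin_diagonalIn_apply (b : n) (x : EuclideanSpace ℂ n) :
    ⟪e b, toEuclideanLin (diagonalIn e c) x⟫_ℂ = c b * ⟪e b, x⟫_ℂ := by
  rw [toEuclideanLin_diagonalIn_apply, he.inner_right_fintype]

theorem toEuclideanLin_diagonalIn_apply_self (b : n) :
    toEuclideanLin (diagonalIn e c) (e b) = c b • e b := by
  rw [toEuclideanLin_diagonalIn_apply, Finset.sum_eq_single b]
  · simp [he.1 b]
  · intro a _ hab
    simp [he.inner_eq_zero hab]
  · simp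

theorem exists_eq_of_toEuclideanLin_diagonalIn_apply_eq_smul {x : EuclideanSpace ℂ n} {μ : ℂ}
    (hx : x ≠ 0) (h : toEuclideanLin (diagonalIn e c) x = μ • x) : ∃ b, c b = μ := by
  rcases isEmpty_or_nonempty n with hn | hn
  · exact absurd (Subsingleton.elim x 0) hx
  obtain ⟨b, hb⟩ : ∃ b, ⟪e b, x⟫_ℂ ≠ 0 := by
    by_contra! hall
    refine hx <| InnerProductSpace.ext_inner_left_basis
      (basisOfOrthonormalOfCardEqFinrank he (by simp)) fun b => ?_
    simp [hall]
  refine ⟨b, mul_right_cancel₀ hb ?_⟩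
  rw [← he.inner_toEuclideanLin_diagonalIn_apply, h, inner_smul_right]

end Orthonormal

end DiagonalIn

section Projection

variable {𝕜 E : Type*} [RCLike 𝕜] [NormedAddCommGroup E] [InnerProductSpace 𝕜 E]

open RCLike

theorem LinearMap.IsSymmetricProjection.norm_apply_sq {T : E →ₗ[𝕜] E}
    (hT : T.IsSymmetricProjection) (x : E) : ‖T x‖ ^ 2 = re ⟪x, T x⟫_𝕜 := by
  rw [← inner_self_eq_norm_sq (𝕜 := 𝕜), hT.isSymmetric, ← Module.End.mul_apply,
    hT.isIdempotentElem.eq]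

theorem LinearMap.IsSymmetricProjection.mul_one_sub_le_sq_sum_norm {ι : Type*}
    {T : E →ₗ[𝕜] E} (hT : T.IsSymmetricProjection) {x : E} (hx : ‖x‖ = 1) {q : ℝ}
    (s : Finset ι) (w : ι → E) (hTx : T x = (q : 𝕜) • x + ∑ j ∈ s, w j)
    (hw : ∀ j ∈ s, ⟪x, w j⟫_𝕜 = 0) :
    q * (1 - q) ≤ (∑ j ∈ s, ‖w j‖) ^ 2 := by
  have hxw : ⟪x, ∑ j ∈ s, w j⟫_𝕜 = 0 := by rw [inner_sum, Finset.sum_eq_zero hw]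
  have hq : re ⟪x, T x⟫_𝕜 = q := by
    rw [hTx, inner_add_right, inner_smul_right, inner_self_eq_norm_sq_to_K, hx, hxw]
    simp
  have hpyth : ‖T x‖ ^ 2 = q ^ 2 + ‖∑ j ∈ s, w j‖ ^ 2 := by
    rw [hTx, @norm_add_sq 𝕜, inner_smul_left, hxw, mul_zero, map_zero, mul_zero, add_zero,
      norm_smul, hx]
    simp
  have hw_norm : ‖∑ j ∈ s, w j‖ ^ 2 = q * (1 - q) := by
    rw [hT.norm_apply_sq, hq] at hpyth
    linarith
  rw [← hw_norm]
  gcongr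
  exact norm_sum_le _ _

variable {n : Type*} [Fintype n] [DecidableEq n]

theorem Matrix.isSymmetricProjection_toEuclideanLin {P : Matrix n n 𝕜} (hP : P.IsHermitian)
    (hPP : IsIdempotentElem P) : (toEuclideanLin P).IsSymmetricProjection :=
  ⟨hPP.map (toLpLinAlgEquiv 2), isSymmetric_toEuclideanLin_iff.mpr hP⟩

theorem Matrix.toEuclideanLin_apply_eq_of_sub_smul_one_eq_sum {ι : Type*} [Fintype ι]
    [DecidableEq ι] {P : Matrix n n 𝕜} {A : ι → Matrix n n 𝕜} {a μ : 𝕜}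
    (hdec : P - a • 1 = ∑ i, A i) {r : ι} {x : EuclideanSpace 𝕜 n}
    (hx : toEuclideanLin (A r) x = μ • x) :
    toEuclideanLin P x = (μ + a) • x + ∑ i ∈ Finset.univ.erase r, toEuclideanLin (A i) x := by
  rw [sub_eq_iff_eq_add.mp hdec, map_add, map_sum, map_smul, toLpLin_one, LinearMap.add_apply,
    LinearMap.sum_apply, ← Finset.add_sum_erase _ _ (Finset.mem_univ r), hx,
    LinearMap.smul_apply, LinearMap.id_apply]
  module

end Projection

section Trace

variable {n R : Type*} [Fintype n] [CommRing R]

theorem Matrix.trace_sum_mul_sum_of_pairwise {ι : Type*} [Fintype ι] (A : ι → Matrix n n R)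
    (hA : Pairwise fun i j => trace (A i * A j) = 0) :
    trace ((∑ i, A i) * ∑ i, A i) = ∑ i, trace (A i * A i) := by
  rw [Finset.sum_mul_sum, trace_sum]
  refine Finset.sum_congr rfl fun i _ => ?_
  rw [trace_sum, Finset.sum_eq_single i (fun j _ hji => hA hji.symm) (by simp)]

variable [DecidableEq n]

theorem Matrix.trace_sub_smul_one_mul_self {P : Matrix n n R} (hP : IsIdempotentElem P) (a : R) :
    trace ((P - a • 1) * (P - a • 1)) = (1 - 2 * a) * trace P + a ^ 2 * Fintype.card n := by
  simp only [sub_mul, mul_sub, hP.eq, smul_mul_smul_comm, Matrix.smul_mul, Matrix.mul_smul,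
    Matrix.one_mul, Matrix.mul_one, trace_sub, trace_smul, trace_one, smul_eq_mul]
  ring

theorem Matrix.sum_trace_mul_self_eq_of_sub_smul_one_eq_sum {K ι : Type*} [Field K] [Fintype ι]
    {P : Matrix n n K} (hP : IsIdempotentElem P) (htr : trace P = 1) {A : ι → Matrix n n K}
    (hA : Pairwise fun i j => trace (A i * A j) = 0)
    (hdec : P - (1 / Fintype.card n : K) • 1 = ∑ i, A i) :
    ∑ i, trace (A i * A i) = 1 - 1 / Fintype.card n := by
  rw [← trace_sum_mul_sum_of_pairwise A hA, ← hdec, trace_sub_smul_one_mul_self hP, htr]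
  rcases eq_or_ne (Fintype.card n : K) 0 with h | h
  · simp [h]
  · field_simp
    ring

end Trace

theorem sub_one_div_mul_le_of_one_div_le_sq {d k T : ℝ} (hd : 1 < d) (hk : 0 < k) (hT : 0 ≤ T)
    (h : 1 / k ≤ (d / √(d - 1) * √(T / d)) ^ 2) : (d - 1) / (d * k) ≤ T := by
  rw [mul_pow, div_pow, Real.sq_sqrt (by linarith), Real.sq_sqrt (by positivity),
    show d ^ 2 / (d - 1) * (T / d) = d * T / (d - 1) by field_simp,
    div_le_div_iff₀ hk (by linarith)] at h
  rw [div_le_iff₀ (by positivity)]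
  linarith

theorem sq_sum_erase_le {k : ℕ} {S w : Fin k → ℝ} {d : ℝ} (hd : 0 < d)
    (hsum : ∑ j, S j = 1 - 1 / d) {r : Fin k} (hr : (d - 1) / (d * k) ≤ S r)
    (hw : ∀ j ∈ Finset.univ.erase r, w j ^ 2 = S j / d) :
    (∑ j ∈ Finset.univ.erase r, w j) ^ 2 ≤ (k - 1) ^ 2 * (d - 1) / (d ^ 2 * k) := by
  have hk : (1 : ℝ) ≤ k := by exact_mod_cast r.pos
  calc (∑ j ∈ Finset.univ.erase r, w j) ^ 2
      ≤ (Finset.univ.erase r).card * ∑ j ∈ Finset.univ.erase r, w j ^ 2 :=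
        sq_sum_le_card_mul_sum_sq
    _ = (k - 1) * ((1 - 1 / d - S r) / d) := by
        rw [Finset.card_erase_of_mem (Finset.mem_univ r), Finset.card_univ, Fintype.card_fin,
          Nat.cast_sub r.pos, Finset.sum_congr rfl hw, ← Finset.sum_div,
          Finset.sum_erase_eq_sub (Finset.mem_univ r), hsum, Nat.cast_one]
    _ ≤ (k - 1) * ((1 - 1 / d - (d - 1) / (d * k)) / d) := by gcongr
    _ = (k - 1) ^ 2 * (d - 1) / (d ^ 2 * k) := by field_simp

theorem le_or_le_of_sq_sub_mul_add_nonneg {x b c : ℝ} (h : 0 ≤ x ^ 2 - b * x + c) :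
    x ≤ (b - √(b ^ 2 - 4 * c)) / 2 ∨ (b + √(b ^ 2 - 4 * c)) / 2 ≤ x := by
  by_contra! hx
  obtain ⟨h₁, h₂⟩ := hx
  rcases le_or_gt (b ^ 2 - 4 * c) 0 with hΔ | hΔ
  · rw [Real.sqrt_eq_zero'.mpr hΔ] at h₁ h₂
    linarith
  · nlinarith [mul_pos (sub_pos.mpr h₁) (sub_pos.mpr h₂), Real.sq_sqrt hΔ.le]

theorem le_or_le_of_mul_one_sub_le {d k lam : ℝ} (hd : 0 < d) (hk : 0 < k)
    (h : (lam + 1 / d) * (1 - (lam + 1 / d)) ≤ (k - 1) ^ 2 * (d - 1) / (d ^ 2 * k)) :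
    lam ≤ 1 / (2 * d) * (d - 2 - √((d - 2) ^ 2 - 4 * (d - 1) * (k - 3 + 1 / k))) ∨
      1 / (2 * d) * (d - 2 + √((d - 2) ^ 2 - 4 * (d - 1) * (k - 3 + 1 / k))) ≤ lam := by
  have hquad : 0 ≤ (d * lam) ^ 2 - (d - 2) * (d * lam) + (d - 1) * (k - 3 + 1 / k) := by
    have e₁ : d ^ 2 * ((lam + 1 / d) * (1 - (lam + 1 / d))) =
        (d * lam + 1) * (d - 1 - d * lam) := by
      field_simp
      ring
    have e₂ : d ^ 2 * ((k - 1) ^ 2 * (d - 1) / (d ^ 2 * k)) = (d - 1) * (k - 2 + 1 / k) := by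
      field_simp
      ring
    have := mul_le_mul_of_nonneg_left h (sq_nonneg d)
    rw [e₁, e₂] at this
    nlinarith
  have hmul (X : ℝ) : 1 / (2 * d) * X = X / 2 / d := by ring
  rw [hmul, hmul, le_div_iff₀ hd, div_le_iff₀ hd, mul_comm lam, mul_assoc 4]
  exact le_or_le_of_sq_sub_mul_add_nonneg hquad

theorem spectral_gap_lemma_general
    (d k : ℕ) (hd : 4 ≤ d)
    (E : Fin k → Fin d → EuclideanSpace ℂ (Fin d))
    (horth : ∀ j, Orthonormal ℂ (E j))
    (hmub : ∀ j j' : Fin k, j ≠ j' → ∀ a b : Fin d,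
      ‖(inner ℂ (E j a) (E j' b) : ℂ)‖ ^ 2 = 1 / (d : ℝ))
    (A : Fin k → Matrix (Fin d) (Fin d) ℂ)
    (hAmem : ∀ j, A j ∈ Submodule.span ℂ
      {M : Matrix (Fin d) (Fin d) ℂ | ∃ a, M = Matrix.vecMulVec (E j a) (star (E j a))})
    (hAherm : ∀ j, A j = (A j)ᴴ)
    (hAtraceless : ∀ j, (A j).trace = 0)
    (P : Matrix (Fin d) (Fin d) ℂ)
    (hP1 : P = Pᴴ) (hP2 : P = P * P) (hP3 : P.trace = 1)
    (hdecomp : P - (1 / (d : ℂ)) • 1 = ∑ j, A j)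
    (t : Fin k → ℝ)
    (ht : ∀ j, t j = ((d : ℝ) / Real.sqrt ((d : ℝ) - 1)) *
      Real.sqrt (((A j ^ 2).trace.re) / (d : ℝ)))
    (r : Fin k) (htr : 1 / (k : ℝ) ≤ t r ^ 2)
    (lam : ℝ) (v : Fin d → ℂ) (hv : v ≠ 0)
    (heig : (A r).mulVec v = (lam : ℂ) • v) :
    lam ≤ (1 / (2 * (d : ℝ))) * ((d : ℝ) - 2 -
        Real.sqrt (((d : ℝ) - 2) ^ 2 - 4 * ((d : ℝ) - 1) * ((k : ℝ) - 3 + 1 / (k : ℝ)))) ∨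
    (1 / (2 * (d : ℝ))) * ((d : ℝ) - 2 +
        Real.sqrt (((d : ℝ) - 2) ^ 2 - 4 * ((d : ℝ) - 1) * ((k : ℝ) - 3 + 1 / (k : ℝ)))) ≤ lam := by
  have hd₀ : (0 : ℝ) < d := by positivity
  have hk₀ : (0 : ℝ) < k := by exact_mod_cast r.pos
  choose c hc using fun j => exists_diagonalIn_eq_of_mem_span (hAmem j)
  set S : Fin k → ℝ := fun j => ∑ a, ‖c j a‖ ^ 2
  have hsum_zero (j) : ∑ a, c j a = 0 :=
    (horth j).trace_diagonalIn.symm.trans (hc j ▸ hAtraceless j)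
  have htrace_sq (j) : trace (A j * A j) = S j := by
    nth_rewrite 2 [hAherm j]
    rw [← hc j, (horth j).trace_diagonalIn_mul_conjTranspose]
  have hS_sum : ∑ j, S j = 1 - 1 / d := by
    have := sum_trace_mul_self_eq_of_sub_smul_one_eq_sum hP2.symm hP3 (A := A)
      (fun i j hij => by
        simp [← hc, trace_diagonalIn_mul_diagonalIn_of_norm_inner_sq_eq (hmub i j hij), hsum_zero])
      (by rwa [Fintype.card_fin])
    exact Complex.ofReal_injective (by simpa [htrace_sq] using this)
  have hSr : (d - 1) / (d * k) ≤ S r :=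
    sub_one_div_mul_le_of_one_div_le_sq (by norm_cast; omega) hk₀ (by positivity)
      (by rwa [ht, sq (A r), htrace_sq, Complex.ofReal_re] at htr)
  obtain ⟨a₀, ha₀⟩ := (horth r).exists_eq_of_toEuclideanLin_diagonalIn_apply_eq_smul
    (x := WithLp.toLp 2 v) (by simpa using hv) (by rw [hc r]; ext i; simpa using congrFun heig i)
  have hPx := toEuclideanLin_apply_eq_of_sub_smul_one_eq_sum hdecomp (x := E r a₀)
    (by rw [← hc r, (horth r).toEuclideanLin_diagonalIn_apply_self, ha₀])
  have key := (isSymmetricProjection_toEuclideanLin hP1.symm hP2.symm).mul_one_sub_le_sq_sum_norm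
    ((horth r).1 a₀) (q := lam + 1 / d) _ _ (by push_cast; exact hPx) fun j hj => by
      rw [← hc j, inner_toEuclideanLin_diagonalIn_apply_of_norm_inner_sq_eq
        (hmub j r (Finset.ne_of_mem_erase hj) · a₀), hsum_zero, mul_zero]
  refine le_or_le_of_mul_one_sub_le hd₀ hk₀ (key.trans (sq_sum_erase_le hd₀ hS_sum hSr ?_))
  intro j hj
  rw [← hc j, (horth j).norm_toEuclideanLin_diagonalIn_apply_sq_of_norm_inner_sq_eq
    (hmub j r (Finset.ne_of_mem_erase hj) · a₀), one_div_mul_eq_div]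

/-- The spectral-gap lemma: for `d ≥ 4`, `2 ≤ k ≤ √d`, pairwise mutually
unbiased orthonormal bases `E 1, …, E k` of `ℂ^d` with associated MASAs
`𝒜_j = span{rank-one projections onto the vectors of E j}`, if a rank-one orthogonal
projection `P` has traceless part decomposed as `P - (1/d)·I = A 1 + ⋯ + A k` with each
`A j ∈ 𝒜_j` Hermitian and traceless, with all length ratios `t j ∈ (0,1)`, then for any
index `r` with `t r ² ≥ 1/k`, every eigenvalue `λ` of `A r` satisfies `λ ≤ λ₋` or `λ ≥ λ₊`. -/
theorem spectral_gap_lemma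
    (d k : ℕ) (hd : 4 ≤ d) (hk2 : 2 ≤ k) (hk : (k : ℝ) ≤ Real.sqrt d)
    (E : Fin k → Fin d → EuclideanSpace ℂ (Fin d))
    (horth : ∀ j, Orthonormal ℂ (E j))
    (hmub : ∀ j j' : Fin k, j ≠ j' → ∀ a b : Fin d,
      ‖(inner ℂ (E j a) (E j' b) : ℂ)‖ ^ 2 = 1 / (d : ℝ))
    (A : Fin k → Matrix (Fin d) (Fin d) ℂ)
    (hAmem : ∀ j, A j ∈ Submodule.span ℂ
      {M : Matrix (Fin d) (Fin d) ℂ | ∃ a, M = Matrix.vecMulVec (E j a) (star (E j a))})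
    (hAherm : ∀ j, A j = (A j)ᴴ)
    (hAtraceless : ∀ j, (A j).trace = 0)
    (P : Matrix (Fin d) (Fin d) ℂ)
    (hP1 : P = Pᴴ) (hP2 : P = P * P) (hP3 : P.trace = 1)
    (hdecomp : P - (1 / (d : ℂ)) • 1 = ∑ j, A j)
    (t : Fin k → ℝ)
    (ht : ∀ j, t j = ((d : ℝ) / Real.sqrt ((d : ℝ) - 1)) *
      Real.sqrt (((A j ^ 2).trace.re) / (d : ℝ)))
    (ht01 : ∀ j, 0 < t j ∧ t j < 1)
    (r : Fin k) (htr : 1 / (k : ℝ) ≤ t r ^ 2)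
    (lam : ℝ) (v : Fin d → ℂ) (hv : v ≠ 0)
    (heig : (A r).mulVec v = (lam : ℂ) • v) :
    lam ≤ (1 / (2 * (d : ℝ))) * ((d : ℝ) - 2 -
        Real.sqrt (((d : ℝ) - 2) ^ 2 - 4 * ((d : ℝ) - 1) * ((k : ℝ) - 3 + 1 / (k : ℝ)))) ∨
    (1 / (2 * (d : ℝ))) * ((d : ℝ) - 2 +
        Real.sqrt (((d : ℝ) - 2) ^ 2 - 4 * ((d : ℝ) - 1) * ((k : ℝ) - 3 + 1 / (k : ℝ)))) ≤ lam :=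
  spectral_gap_lemma_general d k hd E horth hmub A hAmem hAherm hAtraceless P hP1 hP2 hP3 hdecomp t
    ht r htr lam v hv heig
end

section
/- Let d and k be integers with 2 ≤ k and k² ≤ d. Set λ_+ = (1/(2d))·(d − 2 + √((d−2)² − 4(d−1)(k − 3 + 1/k))) and γ = d·λ_+/(d−1). Then √((d−1)(k−2))/(d−2) < γ/(1+γ). -/
lemma appendix_aux_poly (a b : ℝ) (ha : 0 ≤ a) (hb : 0 ≤ b) :
    0 < 33479 + 187336*b + 499920*b^2 + 845411*b^3 + 1001724*b^4 + 864849*b^5 + 551436*b^6 + 260008*b^7 + 90036*b^8 + 22532*b^9 + 3955*b^10 + 461*b^11 + 32*b^12 + 1*b^13 + 49193*a + 238611*a*b + 524273*a*b^2 + 693397*a*b^3 + 614262*a*b^4 + 381672*a*b^5 + 168874*a*b^6 + 52906*a*b^7 + 11443*a*b^8 + 1621*a*b^9 + 135*a*b^10 + 5*a*b^11 + 19882*a^2 + 80772*a^2*b + 142824*a^2*b^2 + 145606*a^2*b^3 + 94755*a^2*b^4 + 40856*a^2*b^5 + 11651*a^2*b^6 + 2112*a^2*b^7 + 220*a^2*b^8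 + 10*a^2*b^9 + 3502*a^3 + 11438*a^3*b + 15376*a^3*b^2 + 11190*a^3*b^3 + 4802*a^3*b^4 + 1220*a^3*b^5 + 170*a^3*b^6 + 10*a^3*b^7 + 287*a^4 + 708*a^4*b + 648*a^4*b^2 + 283*a^4*b^3 + 60*a^4*b^4 + 5*a^4*b^5 + 9*a^5 + 15*a^5*b + 7*a^5*b^2 + 1*a^5*b^3 := by
  obtain ⟨p, rfl⟩ : ∃ p : ℝ, a = p ^ 2 := ⟨Real.sqrt a, (Real.sq_sqrt ha).symm⟩
  obtain ⟨q, rfl⟩ : ∃ q : ℝ, b = q ^ 2 := ⟨Real.sqrt b, (Real.sq_sqrt hb).symm⟩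
  positivity

set_option maxHeartbeats 1000000 in
/-- The first appendix inequality: for integers `2 ≤ k` with `k² ≤ d`,
setting `λ₊ = (1/(2d))(d - 2 + √((d-2)² - 4(d-1)(k - 3 + 1/k)))` and `γ = dλ₊/(d-1)`,
one has `√((d-1)(k-2))/(d-2) < γ/(1+γ)`. -/
theorem appendix_inequality_one
    (d k : ℤ) (hk : 2 ≤ k) (hkd : k ^ 2 ≤ d)
    (lamPlus γ : ℝ)
    (hlam : lamPlus = (1 / (2 * (d : ℝ))) * ((d : ℝ) - 2 +
      Real.sqrt (((d : ℝ) - 2) ^ 2 - 4 * ((d : ℝ) - 1) * ((k : ℝ) - 3 + 1 / (k : ℝ)))))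
    (hγ : γ = (d : ℝ) * lamPlus / ((d : ℝ) - 1)) :
    Real.sqrt (((d : ℝ) - 1) * ((k : ℝ) - 2)) / ((d : ℝ) - 2) < γ / (1 + γ) := by
  have hkR : (2:ℝ) ≤ (k:ℝ) := by exact_mod_cast hk
  have hdR : ((k:ℝ))^2 ≤ (d:ℝ) := by exact_mod_cast hkd
  have hd4 : (4:ℝ) ≤ (d:ℝ) := by nlinarith
  have hkpos : (0:ℝ) < (k:ℝ) := by linarith
  set c : ℝ := (k:ℝ) - 3 + 1 / (k:ℝ) with hc
  set D : ℝ := ((d : ℝ) - 2) ^ 2 - 4 * ((d : ℝ) - 1) * c with hD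
  set s : ℝ := Real.sqrt D with hs
  set t : ℝ := Real.sqrt (((d : ℝ) - 1) * ((k : ℝ) - 2)) with ht
  have hinv : (1:ℝ)/(k:ℝ) ≤ 1/2 := by
    rw [div_le_div_iff₀ hkpos (by norm_num)]; linarith
  have hinvpos : (0:ℝ) < 1/(k:ℝ) := by positivity
  have hDnn : 0 ≤ D := by
    rw [hD, hc]
    have h1 : (k:ℝ) - 3 + 1/(k:ℝ) ≤ (k:ℝ) - 2 - 1/2 := by linarith
    have h2 : 4*((d:ℝ)-1)*((k:ℝ)-3+1/(k:ℝ)) ≤ 4*((d:ℝ)-1)*((k:ℝ)-2-1/2) := by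
      apply mul_le_mul_of_nonneg_left h1 (by linarith)
    nlinarith [sq_nonneg ((k:ℝ)-2), sq_nonneg ((k:ℝ)^2-2*(k:ℝ)), sq_nonneg ((d:ℝ)-(k:ℝ)^2),
      mul_nonneg (sub_nonneg.2 hdR) (sub_nonneg.2 hkR)]
  have hs0 : 0 ≤ s := Real.sqrt_nonneg _
  have hs2D : s^2 = ((d:ℝ)-2)^2 - 4*((d:ℝ)-1)*c := by rw [hs, Real.sq_sqrt hDnn, hD]
  have ht0 : 0 ≤ t := Real.sqrt_nonneg _
  have ht2 : t^2 = ((d:ℝ)-1)*((k:ℝ)-2) := Real.sq_sqrt (by nlinarith)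
  have hd1 : ((d:ℝ)-1) ≠ 0 := by linarith
  have hdne : ((d:ℝ)) ≠ 0 := by linarith
  have hγ' : γ = ((d:ℝ) - 2 + s) / (2*((d:ℝ)-1)) := by
    rw [hγ, hlam]; rw [hs, hD, hc]; field_simp
  clear_value s t
  clear hs ht hlam
  clear_value D
  clear hD hDnn
  -- basic positivity
  have hγpos : 0 < γ := by
    rw [hγ']; apply div_pos (by linarith) (by linarith)
  have hγs : 2*((d:ℝ)-1)*γ = (d:ℝ)-2+s := by
    rw [hγ']; field_simp
  -- γ satisfies the quadratic
  have hQγ : ((d:ℝ)-1)*γ^2 - ((d:ℝ)-2)*γ + c = 0 := by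
    have hsub : s = 2*((d:ℝ)-1)*γ - ((d:ℝ)-2) := by linarith
    rw [hsub] at hs2D
    have h4 : 4*((d:ℝ)-1)*(((d:ℝ)-1)*γ^2 - ((d:ℝ)-2)*γ + c) = 0 := by
      linear_combination hs2D
    have hne : (4*((d:ℝ)-1)) ≠ 0 := by
      intro h; apply hd1; linarith [h]
    rcases mul_eq_zero.mp h4 with h | h
    · exact absurd h hne
    · exact h
  -- t < d - 2
  have htd : t < (d:ℝ) - 2 := by
    have h1 : t^2 < ((d:ℝ)-2)^2 := by
      rw [ht2]
      nlinarith [mul_nonneg (sub_nonneg.2 hdR) (sub_nonneg.2 hkR), sq_nonneg ((k:ℝ)-2)]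
    nlinarith
  have hu0 : 0 < (d:ℝ) - 2 - t := by linarith
  -- the key negativity of the quadratic at t/(d-2-t)
  have hQt : ((d:ℝ)-1)*t^2 - ((d:ℝ)-2)*t*((d:ℝ)-2-t) + c*((d:ℝ)-2-t)^2 < 0 := by
    rcases eq_or_lt_of_le hk with hk2 | hk3
    · -- k = 2
      have hk2R : (k:ℝ) = 2 := by exact_mod_cast hk2.symm
      have ht00 : t = 0 := by
        have : t^2 = 0 := by rw [ht2, hk2R]; ring
        nlinarith
      rw [ht00, hc, hk2R]
      norm_num
      nlinarith [sq_nonneg ((d:ℝ)-2)]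
    · -- k ≥ 3
      have hk3R : (3:ℝ) ≤ (k:ℝ) := by exact_mod_cast hk3
      set eK : ℝ := (k:ℝ)^2 - 3*(k:ℝ) + 1 with heK
      have heK1 : (1:ℝ) ≤ eK := by nlinarith
      have hkc : (k:ℝ) * c = eK := by
        rw [hc, heK]; field_simp
      set M : ℝ := ((d:ℝ)-2)*((k:ℝ)*((d:ℝ)-2)+2*eK) with hM
      set N : ℝ := ((d:ℝ)-1)*((k:ℝ)-2)*((2*(d:ℝ)-3)*(k:ℝ)+eK) + eK*((d:ℝ)-2)^2 with hN
      have hMpos : 0 < M := by rw [hM]; nlinarith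
      have hNnn : 0 ≤ N := by
        rw [hN]
        have h1 : 0 ≤ ((d:ℝ)-1)*((k:ℝ)-2) := by nlinarith
        have h2 : 0 ≤ (2*(d:ℝ)-3)*(k:ℝ)+eK := by nlinarith
        nlinarith [sq_nonneg ((d:ℝ)-2)]
      -- main polynomial inequality
      have hP : 0 < ((d:ℝ)-1)*((k:ℝ)-2)*M^2 - N^2 := by
        have haux := appendix_aux_poly ((d:ℝ) - (k:ℝ)^2) ((k:ℝ) - 3)
          (by linarith) (by linarith)
        have hid : ((d:ℝ)-1)*((k:ℝ)-2)*M^2 - N^2 =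
            33479 + 187336*((k:ℝ)-3) + 499920*((k:ℝ)-3)^2 + 845411*((k:ℝ)-3)^3 + 1001724*((k:ℝ)-3)^4 + 864849*((k:ℝ)-3)^5 + 551436*((k:ℝ)-3)^6 + 260008*((k:ℝ)-3)^7 + 90036*((k:ℝ)-3)^8 + 22532*((k:ℝ)-3)^9 + 3955*((k:ℝ)-3)^10 + 461*((k:ℝ)-3)^11 + 32*((k:ℝ)-3)^12 + 1*((k:ℝ)-3)^13 + 49193*((d:ℝ)-(k:ℝ)^2) + 238611*((d:ℝ)-(k:ℝ)^2)*((k:ℝ)-3) + 524273*((d:ℝ)-(k:ℝ)^2)*((k:ℝ)-3)^2 + 693397*((d:ℝ)-(k:ℝ)^2)*((k:ℝ)-3)^3 + 614262*((d:ℝ)-(k:ℝ)^2)*((k:ℝ)-3)^4 + 381672*((d:ℝ)-(k:ℝ)^2)*((k:ℝ)-3)^5 + 168874*((d:ℝ)-(k:ℝ)^2)*((k:ℝ)-3)^6 + 52906*((d:ℝ)-(k:ℝ)^2)*((k:ℝ)-3)^7 + 11443*((d:ℝ)-(k:ℝ)^2)*((k:ℝ)-3)^8 + 1621*((d:ℝ)-(k:ℝ)^2)*((k:ℝ)-3)^9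 + 135*((d:ℝ)-(k:ℝ)^2)*((k:ℝ)-3)^10 + 5*((d:ℝ)-(k:ℝ)^2)*((k:ℝ)-3)^11 + 19882*((d:ℝ)-(k:ℝ)^2)^2 + 80772*((d:ℝ)-(k:ℝ)^2)^2*((k:ℝ)-3) + 142824*((d:ℝ)-(k:ℝ)^2)^2*((k:ℝ)-3)^2 + 145606*((d:ℝ)-(k:ℝ)^2)^2*((k:ℝ)-3)^3 + 94755*((d:ℝ)-(k:ℝ)^2)^2*((k:ℝ)-3)^4 + 40856*((d:ℝ)-(k:ℝ)^2)^2*((k:ℝ)-3)^5 + 11651*((d:ℝ)-(k:ℝ)^2)^2*((k:ℝ)-3)^6 + 2112*((d:ℝ)-(k:ℝ)^2)^2*((k:ℝ)-3)^7 + 220*((d:ℝ)-(k:ℝ)^2)^2*((k:ℝ)-3)^8 + 10*((d:ℝ)-(k:ℝ)^2)^2*((k:ℝ)-3)^9 + 3502*((d:ℝ)-(k:ℝ)^2)^3 + 11438*((d:ℝ)-(k:ℝ)^2)^3*((k:ℝ)-3) + 15376*((d:ℝ)-(k:ℝ)^2)^3*((k:ℝ)-3)^2 + 11190*((d:ℝ)-(k:ℝ)^2)^3*((k:ℝ)-3)^3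 + 4802*((d:ℝ)-(k:ℝ)^2)^3*((k:ℝ)-3)^4 + 1220*((d:ℝ)-(k:ℝ)^2)^3*((k:ℝ)-3)^5 + 170*((d:ℝ)-(k:ℝ)^2)^3*((k:ℝ)-3)^6 + 10*((d:ℝ)-(k:ℝ)^2)^3*((k:ℝ)-3)^7 + 287*((d:ℝ)-(k:ℝ)^2)^4 + 708*((d:ℝ)-(k:ℝ)^2)^4*((k:ℝ)-3) + 648*((d:ℝ)-(k:ℝ)^2)^4*((k:ℝ)-3)^2 + 283*((d:ℝ)-(k:ℝ)^2)^4*((k:ℝ)-3)^3 + 60*((d:ℝ)-(k:ℝ)^2)^4*((k:ℝ)-3)^4 + 5*((d:ℝ)-(k:ℝ)^2)^4*((k:ℝ)-3)^5 + 9*((d:ℝ)-(k:ℝ)^2)^5 + 15*((d:ℝ)-(k:ℝ)^2)^5*((k:ℝ)-3) + 7*((d:ℝ)-(k:ℝ)^2)^5*((k:ℝ)-3)^2 + 1*((d:ℝ)-(k:ℝ)^2)^5*((k:ℝ)-3)^3 := by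
          rw [hM, hN, heK]; ring
        rw [hid]; exact haux
      have hNtM : N < t * M := by
        refine lt_of_pow_lt_pow_left₀ 2 (mul_nonneg ht0 hMpos.le) ?_
        have htM2 : (t*M)^2 = ((d:ℝ)-1)*((k:ℝ)-2)*M^2 := by
          rw [mul_pow, ht2]
        nlinarith
      -- k * Qt = N - t*M < 0, so Qt < 0
      have hkQt : (k:ℝ) * (((d:ℝ)-1)*t^2 - ((d:ℝ)-2)*t*((d:ℝ)-2-t) + c*((d:ℝ)-2-t)^2)
          = N - t*M := by
        rw [hN, hM]
        linear_combination ((k:ℝ)*(2*(d:ℝ)-3) + eK) * ht2 + (((d:ℝ)-2-t)^2) * hkc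
      by_contra hcon
      push_neg at hcon
      linarith [mul_nonneg hkpos.le hcon]
  -- now t < (d-2-t)*γ
  have hmain : t < ((d:ℝ)-2-t)*γ := by
    by_contra hcontra
    push_neg at hcontra
    have h1 : 0 ≤ t - ((d:ℝ)-2-t)*γ := by linarith
    have hA : 0 ≤ ((d:ℝ)-1)*(t - ((d:ℝ)-2-t)*γ) := mul_nonneg (by linarith) h1
    have hB : 0 ≤ (((d:ℝ)-2-t))*s := mul_nonneg hu0.le hs0
    have hsub : s = 2*((d:ℝ)-1)*γ - ((d:ℝ)-2) := by linarith
    rw [hsub] at hB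
    have hfac : 0 ≤ ((d:ℝ)-1)*(t + ((d:ℝ)-2-t)*γ) - ((d:ℝ)-2)*((d:ℝ)-2-t) := by
      linarith [hA, hB]
    have hQγu : (((d:ℝ)-2-t))^2 * (((d:ℝ)-1)*γ^2 - ((d:ℝ)-2)*γ + c) = 0 := by
      rw [hQγ]; ring
    linarith [mul_nonneg h1 hfac, hQγu, hQt]
  -- conclude
  have h1γpos : 0 < 1 + γ := by linarith
  rw [div_lt_div_iff₀ (by linarith : (0:ℝ) < (d:ℝ)-2) h1γpos]
  nlinarith [hmain, hγpos]
end

section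
/- Let d and k be integers with 2 ≤ k and k² ≤ d. Set λ_− = (1/(2d))·(d − 2 − √((d−2)² − 4(d−1)(k − 3 + 1/k))). Then √(k−2)·(k−1)/√k < (d − 2 − d·λ_−)/√(d−1). -/
set_option maxHeartbeats 1000000 in
/-- The second appendix inequality: for integers `2 ≤ k` with `k² ≤ d`,
setting `λ₋ = (1/(2d))(d - 2 - √((d-2)² - 4(d-1)(k - 3 + 1/k)))`,
one has `√(k-2)·(k-1)/√k < (d - 2 - dλ₋)/√(d-1)`. -/
theorem appendix_inequality_two
    (d k : ℤ) (hk : 2 ≤ k) (hkd : k ^ 2 ≤ d)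
    (lamMinus : ℝ)
    (hlam : lamMinus = (1 / (2 * (d : ℝ))) * ((d : ℝ) - 2 -
      Real.sqrt (((d : ℝ) - 2) ^ 2 - 4 * ((d : ℝ) - 1) * ((k : ℝ) - 3 + 1 / (k : ℝ))))) :
    Real.sqrt ((k : ℝ) - 2) * ((k : ℝ) - 1) / Real.sqrt (k : ℝ) <
      ((d : ℝ) - 2 - (d : ℝ) * lamMinus) / Real.sqrt ((d : ℝ) - 1) := by
  have hk2 : (2:ℝ) ≤ (k:ℝ) := by exact_mod_cast hk
  have hkd' : ((k:ℝ))^2 ≤ (d:ℝ) := by exact_mod_cast hkd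
  have hd4 : (4:ℝ) ≤ (d:ℝ) := by nlinarith
  have hdpos : (0:ℝ) < (d:ℝ) := by linarith
  have hkpos : (0:ℝ) < (k:ℝ) := by linarith
  have hd1 : (0:ℝ) < (d:ℝ) - 1 := by linarith
  have hsd1 : 0 < Real.sqrt ((d:ℝ)-1) := Real.sqrt_pos.mpr hd1
  set D := ((d : ℝ) - 2) ^ 2 - 4 * ((d : ℝ) - 1) * ((k : ℝ) - 3 + 1 / (k : ℝ)) with hD
  set s := Real.sqrt D with hs
  have hs0 : 0 ≤ s := Real.sqrt_nonneg _
  have hrw : (d:ℝ) - 2 - (d:ℝ) * lamMinus = ((d:ℝ) - 2 + s)/2 := by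
    rw [hlam]; field_simp; ring
  rw [hrw]
  rcases eq_or_lt_of_le hk with hk2' | hk3
  · -- k = 2 : left side vanishes
    have hkr : (k:ℝ) = 2 := by exact_mod_cast hk2'.symm
    have hL : Real.sqrt ((2:ℝ)-2) * ((2:ℝ)-1) / Real.sqrt 2 = 0 := by norm_num
    rw [hkr, hL]
    exact div_pos (by linarith) hsd1
  · have hk3' : (3:ℝ) ≤ (k:ℝ) := by exact_mod_cast hk3
    have hu : (0:ℝ) ≤ (k:ℝ) - 3 := by linarith
    have ht : (0:ℝ) ≤ (d:ℝ) - (k:ℝ)^2 := by linarith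
    have hDk : D * (k:ℝ) = (k:ℝ)*((d:ℝ)-2)^2 - 4*((d:ℝ)-1)*((k:ℝ)^2-3*(k:ℝ)+1) := by
      rw [hD]; field_simp
    have hDk0 : 0 ≤ D * (k:ℝ) := by
      rw [hDk]
      nlinarith [pow_nonneg hu 2, pow_nonneg hu 3, pow_nonneg hu 4, pow_nonneg hu 5,
        mul_nonneg ht hu, mul_nonneg ht (pow_nonneg hu 2), mul_nonneg ht (pow_nonneg hu 3),
        mul_nonneg (mul_nonneg ht ht) hkpos.le, mul_nonneg ht ht, mul_nonneg ht hu]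
    have hD0 : 0 ≤ D := (mul_nonneg_iff_of_pos_right hkpos).mp hDk0
    have hs2 : s^2 = D := Real.sq_sqrt hD0
    have h1 : (0:ℝ) < (k:ℝ)*(((k:ℝ)-1)^2*((k:ℝ)-2))*((k:ℝ)^2-2)^2
        - ((k:ℝ)^2-1)*(((k:ℝ)-2)*((k:ℝ)-1)*(k:ℝ)-1)^2 := by
      nlinarith [pow_nonneg hu 2, pow_nonneg hu 3, pow_nonneg hu 4, pow_nonneg hu 5,
        pow_nonneg hu 6, pow_nonneg hu 7, hu]
    have h2 : (0:ℝ) ≤ 2*(k:ℝ)*(((k:ℝ)-1)^2*((k:ℝ)-2))*((k:ℝ)^2-2)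
        - (((k:ℝ)-2)*((k:ℝ)-1)*(k:ℝ)-1)^2 := by
      nlinarith [pow_nonneg hu 2, pow_nonneg hu 3, pow_nonneg hu 4, pow_nonneg hu 5,
        pow_nonneg hu 6, hu]
    have hpoly : ((d:ℝ)-1)*(((k:ℝ)-2)*((k:ℝ)-1)*(k:ℝ)-1)^2 <
        (k:ℝ)*((d:ℝ)-2)^2*(((k:ℝ)-1)^2*((k:ℝ)-2)) := by
      nlinarith [h1, mul_nonneg ht h2,
        mul_nonneg (mul_nonneg ht ht)
          (mul_nonneg (mul_nonneg hkpos.le (sq_nonneg ((k:ℝ)-1))) (by linarith : (0:ℝ) ≤ (k:ℝ)-2))]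
    have hkey : 2*((d:ℝ)-1)*(((k:ℝ)-2)*((k:ℝ)-1)*(k:ℝ)-1) - (k:ℝ)*((d:ℝ)-2)^2 <
        (k:ℝ)*((d:ℝ)-2)*s := by
      rcases lt_or_ge (2*((d:ℝ)-1)*(((k:ℝ)-2)*((k:ℝ)-1)*(k:ℝ)-1) - (k:ℝ)*((d:ℝ)-2)^2) 0 with hX | hX
      · exact lt_of_lt_of_le hX
          (mul_nonneg (mul_nonneg hkpos.le (by linarith : (0:ℝ) ≤ (d:ℝ)-2)) hs0)
      · have hsq : (2*((d:ℝ)-1)*(((k:ℝ)-2)*((k:ℝ)-1)*(k:ℝ)-1) - (k:ℝ)*((d:ℝ)-2)^2)^2 <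
            ((k:ℝ)*((d:ℝ)-2)*s)^2 := by
          have hrs : ((k:ℝ)*((d:ℝ)-2)*s)^2 = (k:ℝ)*((d:ℝ)-2)^2*(D*(k:ℝ)) := by
            rw [mul_pow, mul_pow, hs2]; ring
          rw [hrs, hDk]
          nlinarith [mul_pos hd1 (sub_pos.2 hpoly)]
        exact lt_of_pow_lt_pow_left₀ 2
          (mul_nonneg (mul_nonneg hkpos.le (by linarith : (0:ℝ) ≤ (d:ℝ)-2)) hs0) hsq
    have hks2 : (k:ℝ)*s^2 = (k:ℝ)*((d:ℝ)-2)^2 - 4*((d:ℝ)-1)*((k:ℝ)^2-3*(k:ℝ)+1) := by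
      rw [hs2]; linarith [hDk]
    have hRnn : (0:ℝ) ≤ (((d:ℝ)-2+s)/2) / Real.sqrt ((d:ℝ)-1) :=
      div_nonneg (by linarith) hsd1.le
    apply lt_of_pow_lt_pow_left₀ 2 hRnn
    rw [div_pow, div_pow, mul_pow, Real.sq_sqrt (by linarith : (0:ℝ) ≤ (k:ℝ)-2),
      Real.sq_sqrt hkpos.le, Real.sq_sqrt hd1.le, div_lt_div_iff₀ hkpos hd1]
    nlinarith [hkey, hks2]
end

section
/- Let d and j be positive integers with j < d. If d − j divides d², then j ≥ ⌊√d⌋ (the integer square root of d). In other words, the gap between d and the next smallest divisor of d² is at least ⌊√d⌋. -/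
/-- If `0 < j < d` and `d - j` divides `d²`, then `j ≥ ⌊√d⌋`:
the gap between `d` and the next smallest divisor of `d²` is at least `⌊√d⌋`. -/
theorem divisor_gap (d j : ℕ) (hj : 0 < j) (hjd : j < d) (hdvd : (d - j) ∣ d ^ 2) :
    Nat.sqrt d ≤ j := by
  have hle : j ≤ d := le_of_lt hjd
  have hkey : d ^ 2 = (d - j) * (d + j) + j ^ 2 := by
    have := Nat.sub_add_cancel hle
    nlinarith [Nat.sub_add_cancel hle]
  have hdvdj : (d - j) ∣ j ^ 2 := by
    have h2 : (d - j) ∣ (d - j) * (d + j) := Dvd.intro _ rfl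
    have := (Nat.dvd_sub hdvd h2)
    rwa [hkey, Nat.add_sub_cancel_left] at this
  have hle2 : d - j ≤ j ^ 2 := Nat.le_of_dvd (by positivity) hdvdj
  by_contra h
  push_neg at h
  have h1 : j + 1 ≤ Nat.sqrt d := h
  have h2 : (j + 1) * (j + 1) ≤ d :=
    le_trans (Nat.mul_le_mul h1 h1) (Nat.sqrt_le d)
  nlinarith
end

section
/- Let G be a finite abelian group with |G| = d² and let U : G → M_d(ℂ) be a nice error basis with index group G. Let H and H' be subgroups of G, each of cardinality d with H ∩ H' = {0}, such that the unitaries U(h), h ∈ H, pairwise commute and the unitaries U(h'), h' ∈ H', pairwise commute. Then 𝒜_H := span_ℂ{U(h) : h ∈ H} and 𝒜_{H'} := span_ℂ{U(h') : h' ∈ H'} are commutative ⋆-subalgebras of M_d(ℂ) of complex dimension d containing the identity, and they are quasi-orthogonal: Tr(A·B) = Tr(A)·Tr(B)/d for all A ∈ 𝒜_H and B ∈ 𝒜_{H'}. -/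
open Matrix

/-- A nice error basis with (additive, abelian) index group `G`, `|G| = d²`: a map
`U : G → M_d(ℂ)` with `U 0 = I`, each `U g` unitary, `Tr (U g) = 0` for `g ≠ 0`, and
`U g · U h = λ(g,h) · U (g+h)` for some unimodular scalar `λ(g,h)`. -/
def IsNiceErrorBasis (d : ℕ) {G : Type} [AddCommGroup G]
    (U : G → Matrix (Fin d) (Fin d) ℂ) : Prop :=
  U 0 = 1 ∧
  (∀ g, U g ∈ unitary (Matrix (Fin d) (Fin d) ℂ)) ∧
  (∀ g, g ≠ 0 → (U g).trace = 0) ∧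
  (∀ g h, ∃ lam : ℂ, ‖lam‖ = 1 ∧ U g * U h = lam • U (g + h))

section aux
variable {d : ℕ} {G : Type} [AddCommGroup G] {U : G → Matrix (Fin d) (Fin d) ℂ}

lemma NEB_star (hU : IsNiceErrorBasis d U) (h : G) :
    ∃ ν : ℂ, ν ≠ 0 ∧ star (U h) = ν • U (-h) := by
  obtain ⟨h0, huni, htr, hmul⟩ := hU
  obtain ⟨lam, hlam, heq⟩ := hmul h (-h)
  have hne : lam ≠ 0 := by
    intro hc; rw [hc] at hlam; simp at hlam
  refine ⟨lam⁻¹, inv_ne_zero hne, ?_⟩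
  rw [add_neg_cancel, h0] at heq
  have h1 : star (U h) * (U h * U (-h)) = U (-h) := by
    rw [← mul_assoc, (Unitary.mem_iff.mp (huni h)).1, one_mul]
  rw [heq, mul_smul_comm, mul_one] at h1
  rw [← h1, smul_smul, inv_mul_cancel₀ hne, one_smul]

open Classical in
lemma NEB_trace_orth (hU : IsNiceErrorBasis d U) (g h : G) :
    (U g * star (U h)).trace = if g = h then (d : ℂ) else 0 := by
  obtain ⟨ν, hν, hstar⟩ := NEB_star hU h
  obtain ⟨h0, huni, htr, hmul⟩ := hU
  by_cases hgh : g = h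
  · subst hgh
    rw [(Unitary.mem_iff.mp (huni g)).2, if_pos rfl]
    simp
  · obtain ⟨lam, hlam, heq⟩ := hmul g (-h)
    rw [hstar, mul_smul_comm, heq, if_neg hgh]
    have : g + -h ≠ 0 := fun hc => hgh (by rwa [add_neg_eq_zero] at hc)
    simp [trace_smul, htr _ this]

lemma NEB_package [Fintype G] (hU : IsNiceErrorBasis d U) (hd : d ≠ 0)
    (K : AddSubgroup G) (hK : Nat.card K = d)
    (hc : ∀ g ∈ K, ∀ h ∈ K, U g * U h = U h * U g) :
    (1 : Matrix (Fin d) (Fin d) ℂ) ∈ Submodule.span ℂ (U '' (K : Set G)) ∧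
    (∀ a ∈ Submodule.span ℂ (U '' (K : Set G)), ∀ b ∈ Submodule.span ℂ (U '' (K : Set G)),
      a * b ∈ Submodule.span ℂ (U '' (K : Set G))) ∧
    (∀ a ∈ Submodule.span ℂ (U '' (K : Set G)), ∀ b ∈ Submodule.span ℂ (U '' (K : Set G)),
      a * b = b * a) ∧
    (∀ a ∈ Submodule.span ℂ (U '' (K : Set G)),
      star a ∈ Submodule.span ℂ (U '' (K : Set G))) ∧
    Module.finrank ℂ (Submodule.span ℂ (U '' (K : Set G))) = d := by
  obtain ⟨h0, huni, htr, hmul⟩ := hU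
  set A := Submodule.span ℂ (U '' (K : Set G)) with hAdef
  have hmemU : ∀ g ∈ K, U g ∈ A := fun g hg =>
    Submodule.subset_span ⟨g, hg, rfl⟩
  have h1A : (1 : Matrix (Fin d) (Fin d) ℂ) ∈ A := h0 ▸ hmemU 0 K.zero_mem
  refine ⟨h1A, ?_, ?_, ?_, ?_⟩
  · -- multiplication closed
    intro a ha b hb
    refine Submodule.span_induction₂
      (p := fun x y _ _ => x * y ∈ A) ?_ ?_ ?_ ?_ ?_ ?_ ?_ ha hb
    · rintro x y ⟨g, hg, rfl⟩ ⟨h, hh, rfl⟩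
      obtain ⟨lam, _, heq⟩ := hmul g h
      rw [heq]
      exact A.smul_mem _ (hmemU _ (K.add_mem hg hh))
    · intro y _; rw [zero_mul]; exact A.zero_mem
    · intro x _; rw [mul_zero]; exact A.zero_mem
    · intro x y z _ _ _ h1 h2; rw [add_mul]; exact A.add_mem h1 h2
    · intro x y z _ _ _ h1 h2; rw [mul_add]; exact A.add_mem h1 h2
    · intro r x y _ _ h1; rw [smul_mul_assoc]; exact A.smul_mem r h1
    · intro r x y _ _ h1; rw [mul_smul_comm]; exact A.smul_mem r h1
  · -- commutativity
    intro a ha b hb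
    refine Submodule.span_induction₂
      (p := fun x y _ _ => x * y = y * x) ?_ ?_ ?_ ?_ ?_ ?_ ?_ ha hb
    · rintro x y ⟨g, hg, rfl⟩ ⟨h, hh, rfl⟩
      exact hc g hg h hh
    · intro y _; rw [zero_mul, mul_zero]
    · intro x _; rw [zero_mul, mul_zero]
    · intro x y z _ _ _ h1 h2; rw [add_mul, mul_add, h1, h2]
    · intro x y z _ _ _ h1 h2; rw [mul_add, add_mul, h1, h2]
    · intro r x y _ _ h1; rw [smul_mul_assoc, mul_smul_comm, h1]
    · intro r x y _ _ h1; rw [mul_smul_comm, smul_mul_assoc, h1]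
  · -- star closed
    intro a ha
    refine Submodule.span_induction (p := fun x _ => star x ∈ A) ?_ ?_ ?_ ?_ ha
    · rintro x ⟨g, hg, rfl⟩
      obtain ⟨ν, hν, hstar⟩ := NEB_star ⟨h0, huni, htr, hmul⟩ g
      rw [hstar]
      exact A.smul_mem _ (hmemU _ (K.neg_mem hg))
    · show star (0 : Matrix (Fin d) (Fin d) ℂ) ∈ A
      rw [star_zero]; exact A.zero_mem
    · intro x y _ _ h1 h2
      show star (x + y) ∈ A
      rw [star_add]; exact A.add_mem h1 h2
    · intro r x _ h1
      show star (r • x) ∈ A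
      rw [star_smul]; exact A.smul_mem _ h1
  · -- finrank
    classical
    have hli : LinearIndependent ℂ (fun k : K => U (k : G)) := by
      rw [Fintype.linearIndependent_iff]
      intro c hsum j
      have h2 := congrArg (fun X => (X * star (U (j : G))).trace) hsum
      simp only [Finset.sum_mul, smul_mul_assoc, trace_sum, trace_smul, zero_mul,
        trace_zero] at h2
      have h3 : ∀ k : K, c k • (U (k : G) * star (U (j : G))).trace
          = if k = j then c k * d else 0 := by
        intro k
        rw [NEB_trace_orth ⟨h0, huni, htr, hmul⟩]
        by_cases hkj : k = j
        · rw [if_pos hkj, if_pos (congrArg Subtype.val hkj), smul_eq_mul]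
        · rw [if_neg hkj, if_neg (fun hc' => hkj (Subtype.ext hc')), smul_zero]
      rw [Finset.sum_congr rfl (fun k _ => h3 k), Finset.sum_ite_eq' Finset.univ j
        (fun k => c k * d), if_pos (Finset.mem_univ j)] at h2
      have hdC : (d : ℂ) ≠ 0 := Nat.cast_ne_zero.mpr hd
      exact (mul_eq_zero.mp h2).resolve_right hdC
    have hrange : Set.range (fun k : K => U (k : G)) = U '' (K : Set G) :=
      (Set.image_eq_range U (K : Set G)).symm
    rw [hAdef, ← hrange, finrank_span_eq_card hli, ← Nat.card_eq_fintype_card, hK]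
end aux

/-- Let `U : G → M_d(ℂ)` be a nice error basis with abelian index group
`G`, `|G| = d²`, and let `H, H'` be subgroups of order `d` with trivial intersection whose
associated unitaries pairwise commute.  Then `𝒜_H = span{U h : h ∈ H}` and
`𝒜_{H'} = span{U h' : h' ∈ H'}` are commutative ⋆-subalgebras of `M_d(ℂ)` of dimension `d`
containing the identity, and they are quasi-orthogonal:
`Tr(A·B) = Tr(A)·Tr(B)/d` for `A ∈ 𝒜_H`, `B ∈ 𝒜_{H'}`. -/
theorem nice_error_basis_masas
    (d : ℕ) (G : Type) [AddCommGroup G] [Fintype G]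
    (hG : Nat.card G = d ^ 2)
    (U : G → Matrix (Fin d) (Fin d) ℂ)
    (hU : IsNiceErrorBasis d U)
    (H H' : AddSubgroup G)
    (hH : Nat.card H = d) (hH' : Nat.card H' = d)
    (hint : H ⊓ H' = ⊥)
    (hcomm : ∀ g ∈ H, ∀ h ∈ H, U g * U h = U h * U g)
    (hcomm' : ∀ g ∈ H', ∀ h ∈ H', U g * U h = U h * U g)
    (A B : Submodule ℂ (Matrix (Fin d) (Fin d) ℂ))
    (hA : A = Submodule.span ℂ (U '' (H : Set G)))
    (hB : B = Submodule.span ℂ (U '' (H' : Set G))) :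
    ((1 : Matrix (Fin d) (Fin d) ℂ) ∈ A ∧
      (∀ a ∈ A, ∀ b ∈ A, a * b ∈ A) ∧
      (∀ a ∈ A, ∀ b ∈ A, a * b = b * a) ∧
      (∀ a ∈ A, star a ∈ A) ∧
      Module.finrank ℂ A = d) ∧
    ((1 : Matrix (Fin d) (Fin d) ℂ) ∈ B ∧
      (∀ a ∈ B, ∀ b ∈ B, a * b ∈ B) ∧
      (∀ a ∈ B, ∀ b ∈ B, a * b = b * a) ∧
      (∀ a ∈ B, star a ∈ B) ∧
      Module.finrank ℂ B = d) ∧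
    (∀ a ∈ A, ∀ b ∈ B, (a * b).trace = a.trace * b.trace / d) := by
  have hd : d ≠ 0 := by
    have hne : Nonempty H := ⟨⟨0, H.zero_mem⟩⟩
    rw [← hH]
    exact Nat.card_pos.ne'
  have hdC : (d : ℂ) ≠ 0 := Nat.cast_ne_zero.mpr hd
  subst hA hB
  refine ⟨NEB_package hU hd H hH hcomm, NEB_package hU hd H' hH' hcomm', ?_⟩
  -- quasi-orthogonality
  have key : ∀ g ∈ H, ∀ h ∈ H',
      (U g * U h).trace = (U g).trace * (U h).trace / d := by
    intro g hg h hh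
    obtain ⟨h0, huni, htr, hmul⟩ := hU
    by_cases hg0 : g = 0
    · subst hg0
      by_cases hh0 : h = 0
      · subst hh0
        rw [h0, one_mul, trace_one, Fintype.card_fin]
        field_simp
      · rw [h0, one_mul, htr h hh0, trace_one]
        simp
    · have hsum : g + h ≠ 0 := by
        intro hc
        have hgH' : g ∈ H ⊓ H' := by
          refine ⟨hg, ?_⟩
          rw [eq_neg_of_add_eq_zero_left hc]
          exact H'.neg_mem hh
        rw [hint, AddSubgroup.mem_bot] at hgH'
        exact hg0 hgH'
      obtain ⟨lam, _, heq⟩ := hmul g h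
      rw [heq, trace_smul, htr _ hsum, htr g hg0]
      simp
  intro a ha b hb
  revert b hb
  refine Submodule.span_induction
    (p := fun x _ => ∀ b ∈ Submodule.span ℂ (U '' (H' : Set G)),
      (x * b).trace = x.trace * b.trace / ↑d) ?_ ?_ ?_ ?_ ha
  · rintro x ⟨g, hg, rfl⟩ b hb
    refine Submodule.span_induction
      (p := fun y _ => (U g * y).trace = (U g).trace * y.trace / ↑d) ?_ ?_ ?_ ?_ hb
    · rintro y ⟨h, hh, rfl⟩
      exact key g hg h hh
    · show (U g * 0).trace = (U g).trace * (0 : Matrix (Fin d) (Fin d) ℂ).trace / ↑d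
      simp
    · intro x y _ _ h1 h2
      show (U g * (x + y)).trace = (U g).trace * (x + y).trace / ↑d
      rw [mul_add, trace_add, trace_add, h1, h2, mul_add, add_div]
    · intro r x _ h1
      show (U g * r • x).trace = (U g).trace * (r • x).trace / ↑d
      rw [mul_smul_comm, trace_smul, trace_smul, h1, smul_eq_mul, smul_eq_mul]
      ring
  · intro b hb
    simp
  · intro x y _ _ h1 h2 b hb
    rw [add_mul, trace_add, h1 b hb, h2 b hb, trace_add, add_mul, add_div]
  · intro r x _ h1 b hb
    rw [smul_mul_assoc, trace_smul, h1 b hb, trace_smul, smul_eq_mul, smul_eq_mul]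
    ring
end

section
/- Let p be an odd prime and let D ∈ ℤ/pℤ be a quadratic nonresidue, i.e., there is no c ∈ ℤ/pℤ with c² = D. For x, y ∈ ℤ/pℤ let R_{x,y} be the additive subgroup of (ℤ/pℤ)⁴ generated by (1, x, y, 0) and (0, −y, −D·x, 1), and let R_∞ be the additive subgroup generated by (0, 1, 0, 0) and (0, 0, 1, 0). Then each R_{x,y} and R_∞ has exactly p² elements; R_∞ ∩ R_{x,y} = {0} for all x, y; and R_{x₁,y₁} ∩ R_{x₂,y₂} = {0} whenever (x₁, y₁) ≠ (x₂, y₂). -/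
/-!
Over any field `K`, a vector of `R_{x,y}` is determined by its first and last coordinates `(a, b)`,
the middle ones being `a x - b y` and `a y - b D x`, while `R_∞` consists of the vectors with
`a = b = 0`. A common vector of `R_{x₁,y₁}` and `R_{x₂,y₂}` satisfies `a u = b v` and `a v = D b u`
for `(u, v) = (x₁ - x₂, y₁ - y₂) ≠ 0`, hence `a² = D b²`, which forces `a = b = 0` when `D` is not a
square. Over `ℤ/p` additive closures are `ℤ/p`-spans, so the linear independence of each pair of
generators gives the cardinality `p²`.
-/

open Submodule

theorem AddSubgroup.closure_eq_toAddSubgroup_span {n : ℕ} {M : Type*} [AddCommGroup M]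
    [Module (ZMod n) M] (s : Set M) :
    AddSubgroup.closure s = (span (ZMod n) s).toAddSubgroup :=
  le_antisymm ((AddSubgroup.closure_le _).2 subset_span) <| by
    rw [← AddSubgroup.toZModSubmodule_toAddSubgroup n (AddSubgroup.closure s)]
    exact toAddSubgroup_mono (span_le.2 AddSubgroup.subset_closure)

theorem Submodule.natCard_span_pair {R M : Type*} [Ring R] [AddCommGroup M] [Module R M]
    {v w : M} (h : LinearIndependent R ![v, w]) :
    Nat.card (span R {v, w}) = Nat.card R ^ 2 := by
  rw [← Matrix.range_cons_cons_empty v w ![], Nat.card_congr (Module.Basis.span h).equivFun.toEquiv,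
    Nat.card_fun, Nat.card_fin]

variable {K : Type*} [Field K]

def spreadComponent (D x y : K) : Submodule K (Fin 4 → K) :=
  span K {![1, x, y, 0], ![0, -y, -D * x, 1]}

def spreadComponentInf : Submodule K (Fin 4 → K) :=
  span K {![0, 1, 0, 0], ![0, 0, 1, 0]}

theorem spreadComponent_smul_add_smul (D x y a b : K) :
    a • ![1, x, y, 0] + b • ![0, -y, -D * x, 1] = ![a, a * x - b * y, a * y - b * (D * x), b] := by
  ext i; fin_cases i <;> simp <;> ring

theorem mem_spreadComponent_iff {D x y : K} {z : Fin 4 → K} :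
    z ∈ spreadComponent D x y ↔ z 1 = z 0 * x - z 3 * y ∧ z 2 = z 0 * y - z 3 * (D * x) := by
  rw [spreadComponent, mem_span_pair]
  constructor
  · rintro ⟨a, b, rfl⟩
    rw [spreadComponent_smul_add_smul]
    simp
  · rintro ⟨h1, h2⟩
    refine ⟨z 0, z 3, ?_⟩
    rw [spreadComponent_smul_add_smul]
    ext i; fin_cases i <;> simp [h1, h2]

theorem mem_spreadComponentInf_iff {z : Fin 4 → K} :
    z ∈ (spreadComponentInf : Submodule K (Fin 4 → K)) ↔ z 0 = 0 ∧ z 3 = 0 := by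
  rw [spreadComponentInf, mem_span_pair]
  constructor
  · rintro ⟨a, b, rfl⟩
    simp
  · rintro ⟨h0, h3⟩
    refine ⟨z 1, z 2, ?_⟩
    ext i; fin_cases i <;> simp [h0, h3]

theorem linearIndependent_spreadComponent (D x y : K) :
    LinearIndependent K ![![1, x, y, 0], ![0, -y, -D * x, 1]] := by
  refine LinearIndependent.pair_iff.2 fun a b h => ?_
  rw [spreadComponent_smul_add_smul] at h
  exact ⟨by simpa using congrFun h 0, by simpa using congrFun h 3⟩

theorem linearIndependent_spreadComponentInf :
    LinearIndependent K ![(![0, 1, 0, 0] : Fin 4 → K), ![0, 0, 1, 0]] := by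
  refine LinearIndependent.pair_iff.2 fun a b h => ?_
  exact ⟨by simpa using congrFun h 1, by simpa using congrFun h 2⟩

theorem spreadComponentInf_inf_spreadComponent (D x y : K) :
    spreadComponentInf ⊓ spreadComponent D x y = ⊥ := by
  refine eq_bot_iff.2 fun z ⟨hinf, hxy⟩ => (mem_bot K).2 ?_
  rw [SetLike.mem_coe, mem_spreadComponentInf_iff] at hinf
  rw [SetLike.mem_coe, mem_spreadComponent_iff, hinf.1, hinf.2] at hxy
  ext i; fin_cases i <;> simp [hinf, hxy]

theorem eq_zero_of_sq_eq_mul_sq {D a b : K} (hD : ∀ c : K, c ^ 2 ≠ D) (h : a ^ 2 = D * b ^ 2) :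
    a = 0 ∧ b = 0 := by
  have hb : b = 0 := by
    by_contra hb
    exact hD (a / b) (by field_simp; linear_combination h)
  subst hb
  simpa using h

theorem spreadComponent_inf_spreadComponent {D : K} (hD : ∀ c : K, c ^ 2 ≠ D) {x₁ y₁ x₂ y₂ : K}
    (hne : (x₁, y₁) ≠ (x₂, y₂)) :
    spreadComponent D x₁ y₁ ⊓ spreadComponent D x₂ y₂ = ⊥ := by
  refine eq_bot_iff.2 fun z ⟨h₁, h₂⟩ => (mem_bot K).2 ?_
  rw [SetLike.mem_coe, mem_spreadComponent_iff] at h₁ h₂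
  set a := z 0
  set b := z 3
  have hx : a * (x₁ - x₂) = b * (y₁ - y₂) := by linear_combination h₂.1 - h₁.1
  have hy : a * (y₁ - y₂) = D * b * (x₁ - x₂) := by linear_combination h₂.2 - h₁.2
  have hab : a ^ 2 = D * b ^ 2 := by
    obtain hx₁₂ | hy₁₂ : x₁ - x₂ ≠ 0 ∨ y₁ - y₂ ≠ 0 := by
      by_contra! h
      exact hne (Prod.ext (sub_eq_zero.1 h.1) (sub_eq_zero.1 h.2))
    · exact mul_right_cancel₀ hx₁₂ (by linear_combination a * hx + b * hy)
    · exact mul_right_cancel₀ hy₁₂ (by linear_combination a * hy + D * b * hx)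
  obtain ⟨ha, hb⟩ := eq_zero_of_sq_eq_mul_sq hD hab
  ext i; fin_cases i <;> simp [h₁, ha, hb] <;> assumption

theorem subgroups_pairwise_trivial_general
    (p : ℕ) [Fact p.Prime]
    (D : ZMod p) (hD : ∀ c : ZMod p, c ^ 2 ≠ D)
    (R : ZMod p → ZMod p → AddSubgroup (Fin 4 → ZMod p))
    (hR : ∀ x y, R x y = AddSubgroup.closure {![1, x, y, 0], ![0, -y, -D * x, 1]})
    (Rinf : AddSubgroup (Fin 4 → ZMod p))
    (hRinf : Rinf = AddSubgroup.closure {![0, 1, 0, 0], ![0, 0, 1, 0]}) :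
    (∀ x y, Nat.card (R x y) = p ^ 2) ∧
    Nat.card Rinf = p ^ 2 ∧
    (∀ x y, Rinf ⊓ R x y = ⊥) ∧
    (∀ x₁ y₁ x₂ y₂, (x₁, y₁) ≠ (x₂, y₂) → R x₁ y₁ ⊓ R x₂ y₂ = ⊥) := by
  have hR' : ∀ x y, R x y = (spreadComponent D x y).toAddSubgroup := fun x y => by
    rw [hR, AddSubgroup.closure_eq_toAddSubgroup_span (n := p), spreadComponent]
  have hRinf' : Rinf = spreadComponentInf.toAddSubgroup := by
    rw [hRinf, AddSubgroup.closure_eq_toAddSubgroup_span (n := p), spreadComponentInf]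
  refine ⟨fun x y => ?_, ?_, fun x y => ?_, fun x₁ y₁ x₂ y₂ hne => ?_⟩
  · rw [hR']
    exact (natCard_span_pair (linearIndependent_spreadComponent D x y)).trans
      (by rw [Nat.card_zmod])
  · rw [hRinf']
    exact (natCard_span_pair (linearIndependent_spreadComponentInf (K := ZMod p))).trans
      (by rw [Nat.card_zmod])
  · rw [hR', hRinf']
    exact congrArg toAddSubgroup (spreadComponentInf_inf_spreadComponent D x y)
  · rw [hR', hR']
    exact congrArg toAddSubgroup (spreadComponent_inf_spreadComponent hD hne)

/-- Let `p` be an odd prime and `D ∈ ℤ/p` a quadratic nonresidue.  The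
subgroups `R_{x,y} = ⟨(1,x,y,0), (0,−y,−Dx,1)⟩` and `R_∞ = ⟨(0,1,0,0), (0,0,1,0)⟩` of
`(ℤ/p)⁴` each have exactly `p²` elements and have pairwise trivial intersections. -/
theorem subgroups_pairwise_trivial
    (p : ℕ) [Fact p.Prime] (hp : Odd p)
    (D : ZMod p) (hD : ∀ c : ZMod p, c ^ 2 ≠ D)
    (R : ZMod p → ZMod p → AddSubgroup (Fin 4 → ZMod p))
    (hR : ∀ x y, R x y = AddSubgroup.closure {![1, x, y, 0], ![0, -y, -D * x, 1]})
    (Rinf : AddSubgroup (Fin 4 → ZMod p))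
    (hRinf : Rinf = AddSubgroup.closure {![0, 1, 0, 0], ![0, 0, 1, 0]}) :
    (∀ x y, Nat.card (R x y) = p ^ 2) ∧
    Nat.card Rinf = p ^ 2 ∧
    (∀ x y, Rinf ⊓ R x y = ⊥) ∧
    (∀ x₁ y₁ x₂ y₂, (x₁, y₁) ≠ (x₂, y₂) → R x₁ y₁ ⊓ R x₂ y₂ = ⊥) :=
  subgroups_pairwise_trivial_general p D hD R hR Rinf hRinf
end

section
/- Let p be a prime. In (ℤ/pℤ)⁴ let S be the additive subgroup generated by (1, 0, 0, 0) and (0, 0, 1, 0), let R_∞ be the additive subgroup generated by (0, 1, 0, 0) and (0, 0, 1, 0), and for each y ∈ ℤ/pℤ let R_{0,y} be the additive subgroup generated by (1, 0, y, 0) and (0, −y, 0, 1). Then every element of S lies in R_∞ or in R_{0,y} for some y ∈ ℤ/pℤ, while S ≠ R_∞ and S ≠ R_{0,y} for every y. -/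
/-- Let `p` be a prime.  In `(ℤ/p)⁴`, with `S = ⟨(1,0,0,0), (0,0,1,0)⟩`,
`R_∞ = ⟨(0,1,0,0), (0,0,1,0)⟩` and `R_{0,y} = ⟨(1,0,y,0), (0,−y,0,1)⟩`, every element of
`S` lies in `R_∞` or in some `R_{0,y}`, while `S` differs from `R_∞` and from every
`R_{0,y}`. -/
theorem fake_masa_subgroup
    (p : ℕ) [Fact p.Prime]
    (S Rinf : AddSubgroup (Fin 4 → ZMod p))
    (R : ZMod p → AddSubgroup (Fin 4 → ZMod p))
    (hS : S = AddSubgroup.closure {![1, 0, 0, 0], ![0, 0, 1, 0]})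
    (hRinf : Rinf = AddSubgroup.closure {![0, 1, 0, 0], ![0, 0, 1, 0]})
    (hR : ∀ y, R y = AddSubgroup.closure {![1, 0, y, 0], ![0, -y, 0, 1]}) :
    (∀ v ∈ S, v ∈ Rinf ∨ ∃ y : ZMod p, v ∈ R y) ∧
    S ≠ Rinf ∧ (∀ y : ZMod p, S ≠ R y) := by
  subst hS hRinf
  refine ⟨?_, ?_, ?_⟩
  · intro v hv
    rw [AddSubgroup.mem_closure_pair] at hv
    obtain ⟨m, n, rfl⟩ := hv
    by_cases hm : (m : ZMod p) = 0
    · left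
      rw [AddSubgroup.mem_closure_pair]
      refine ⟨0, n, ?_⟩
      funext i
      fin_cases i <;> simp [hm]
    · right
      refine ⟨(n : ZMod p) / (m : ZMod p), ?_⟩
      rw [hR, AddSubgroup.mem_closure_pair]
      refine ⟨m, 0, ?_⟩
      funext i
      fin_cases i <;> simp [mul_div_cancel₀ _ hm]
  · intro h
    have h1 : (![1, 0, 0, 0] : Fin 4 → ZMod p) ∈
        AddSubgroup.closure {![1, 0, 0, 0], ![0, 0, 1, 0]} :=
      AddSubgroup.subset_closure (by simp)
    rw [h, AddSubgroup.mem_closure_pair] at h1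
    obtain ⟨m, n, hmn⟩ := h1
    have := congrFun hmn 0
    simp at this
  · intro y h
    have h1 : (![0, 0, 1, 0] : Fin 4 → ZMod p) ∈
        AddSubgroup.closure {![1, 0, 0, 0], ![0, 0, 1, 0]} :=
      AddSubgroup.subset_closure (by simp)
    rw [h, hR, AddSubgroup.mem_closure_pair] at h1
    obtain ⟨m, n, hmn⟩ := h1
    have h0 := congrFun hmn 0
    have h3 := congrFun hmn 3
    have h2 := congrFun hmn 2
    simp at h0 h3 h2
    rw [h0] at h2
    simp at h2
end
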